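/- arXiv:cs/0605100 — 4 statements merged into one kernel-verified Lean document; each statement's English description precedes it below -/
import Mathlib

section
/- Let ε > 0 and δ ∈ (0,1) be given, and assume there exists θ_min ∈ (0, 1/|S|) such that A'_{i,j} ≥ θ_min and π'_i ≥ θ_min for all states i, j, and that the maximization defining θ̂ = (Â, π̂) is restricted to parameters whose entries are all at least θ_min. If, for each observation m = 1,…,T, the number of importance samples used is L_m = (2 T² N_m⁴ b_m² |log θ_min|² / ε²) · log( 2 N_m² / (1 − (1−δ)^{1/T}) ), then Δ̂(θ̂) − Δ(θ̂) < ε with probability greater than 1 − δ. -/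
/-!
On the event that every importance-sampling statistic `α̂_{t',t''}`, `r̂_{t'}` of observation `m`
lies within `t_m = ε / (T N_m² |log θ_min|)` of its exact value, `Δ̂(θ̂) - Δ(θ̂)` is a sum of these
errors weighted by differences of logarithms of parameters in `[θ_min, 1]`, each at most
`|log θ_min|` in absolute value. The diagonal statistics `α̂_{t,t}` vanish identically, so at most
`N_m²` errors per observation contribute and the sum stays below `ε`.

A self-normalised estimate exceeds its target `f̄` by `t` only if the sum of the `L_m` i.i.d.
variables `z (f - f̄ - t)`, of mean `-t` and range of width `b_m`, is nonnegative. Hoeffding's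
inequality and a union bound over the `N_m² + N_m` statistics therefore bound the failure
probability of observation `m` by `γ = 1 - (1 - δ)^{1/T}` for the given `L_m`, and by independence
the good event has probability above `(1 - γ)^T = 1 - δ`. The samples need not be measurable, so
this probability is computed cell by cell on the finite sample space.
-/

open Finset MeasureTheory ProbabilityTheory

namespace NICO

variable {S : Type*} [Fintype S]

/-- Ordered-path likelihood `P[y|τ,A,π] = π_{y_{τ₁}} ∏_{t=2}^N A_{y_{τ_{t−1}}, y_{τ_t}}`. -/
noncomputable def lik (A : S → S → ℝ) (π : S → ℝ) {N : ℕ} (y : Fin N → S)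
    (τ : Equiv.Perm (Fin N)) : ℝ :=
  ∏ i : Fin N,
    if i.val = 0 then π (y (τ i))
    else A (y (τ ⟨i.val - 1, Nat.lt_of_le_of_lt (Nat.sub_le i.val 1) i.isLt⟩)) (y (τ i))

/-- Posterior over permutations under a uniform prior. -/
noncomputable def post (A : S → S → ℝ) (π : S → ℝ) {N : ℕ} (y : Fin N → S)
    (τ : Equiv.Perm (Fin N)) : ℝ :=
  lik A π y τ / ∑ σ : Equiv.Perm (Fin N), lik A π y σ

/-- Indicator of the event `τ₁ = t'`. -/
def rstat {N : ℕ} (hN : 0 < N) (t' : Fin N) (τ : Equiv.Perm (Fin N)) : ℝ :=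
  if τ ⟨0, hN⟩ = t' then 1 else 0

/-- The number of indices `t ≥ 2` with `τ_t = t'` and `τ_{t−1} = t''`. -/
def astat {N : ℕ} (t' t'' : Fin N) (τ : Equiv.Perm (Fin N)) : ℝ :=
  ∑ t : Fin N,
    if 0 < t.val ∧ τ t = t' ∧
        τ ⟨t.val - 1, Nat.lt_of_le_of_lt (Nat.sub_le t.val 1) t.isLt⟩ = t''
    then 1 else 0

/-- Exact E-step statistic `r̄_{1,t'} = P[τ₁ = t' | y, A, π]`. -/
noncomputable def rbar (A : S → S → ℝ) (π : S → ℝ) {N : ℕ} (hN : 0 < N)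
    (y : Fin N → S) (t' : Fin N) : ℝ :=
  ∑ τ : Equiv.Perm (Fin N), post A π y τ * rstat hN t' τ

/-- Exact E-step statistic `ᾱ_{t',t''}`. -/
noncomputable def abar (A : S → S → ℝ) (π : S → ℝ) {N : ℕ}
    (y : Fin N → S) (t' t'' : Fin N) : ℝ :=
  ∑ τ : Equiv.Perm (Fin N), post A π y τ * astat t' t'' τ

/-- Self-normalized importance-sampling estimate from `L` samples with
weight function `z` and statistic `f`. -/
noncomputable def isAvg {N : ℕ} (z f : Equiv.Perm (Fin N) → ℝ) (L : ℕ)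
    (s : ℕ → Equiv.Perm (Fin N)) : ℝ :=
  (∑ i ∈ Finset.range L, z (s i) * f (s i)) / ∑ i ∈ Finset.range L, z (s i)

/-- `A` is a row-stochastic matrix. -/
def rowStochastic (A : S → S → ℝ) : Prop :=
  (∀ i j, 0 ≤ A i j) ∧ ∀ i, ∑ j, A i j = 1

/-- `π` is a probability vector. -/
def probVec (π : S → ℝ) : Prop :=
  (∀ i, 0 ≤ π i) ∧ ∑ i, π i = 1

/-- The EM auxiliary function built from statistic families `α` and `r`:
`∑ₘ [∑_{t',t''} α i j log A_{y_{t''},y_{t'}} + ∑_{t'} r_{t'} log π_{y_{t'}}]`. -/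
noncomputable def Qaux {T : ℕ} {N : Fin T → ℕ} (y : ∀ m, Fin (N m) → S)
    (α : ∀ m, Fin (N m) → Fin (N m) → ℝ) (r : ∀ m, Fin (N m) → ℝ)
    (A : S → S → ℝ) (π : S → ℝ) : ℝ :=
  ∑ m, ((∑ t', ∑ t'', α m t' t'' * Real.log (A (y m t'') (y m t'))) +
    ∑ t', r m t' * Real.log (π (y m t')))

/-- The exact EM auxiliary function `Q(A,π;A',π')`. -/
noncomputable def Qexact {T : ℕ} {N : Fin T → ℕ} (hN : ∀ m, 0 < N m)
    (y : ∀ m, Fin (N m) → S) (A' : S → S → ℝ) (π' : S → ℝ)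
    (A : S → S → ℝ) (π : S → ℝ) : ℝ :=
  Qaux y (fun m => abar A' π' (y m)) (fun m => rbar A' π' (hN m) (y m)) A π

/-- The Monte Carlo EM auxiliary function `Q̂(A,π;A',π')` built from the
importance samples `samp`. -/
noncomputable def Qhat {T : ℕ} {N : Fin T → ℕ} (hN : ∀ m, 0 < N m)
    (y : ∀ m, Fin (N m) → S) (A' : S → S → ℝ) (π' : S → ℝ)
    (R : ∀ m, Equiv.Perm (Fin (N m)) → ℝ) (L : Fin T → ℕ)
    (samp : ∀ m, ℕ → Equiv.Perm (Fin (N m)))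
    (A : S → S → ℝ) (π : S → ℝ) : ℝ :=
  Qaux y
    (fun m t' t'' =>
      isAvg (fun σ => post A' π' (y m) σ / R m σ) (astat t' t'') (L m) (samp m))
    (fun m t' =>
      isAvg (fun σ => post A' π' (y m) σ / R m σ) (rstat (hN m) t') (L m) (samp m))
    A π


section Hoeffding

variable {κ : Type*} [MeasurableSpace κ] {μ : Measure κ} [IsProbabilityMeasure μ]

theorem measureReal_pi_sum_sub_integral_ge_le {W : κ → ℝ} (hW : Measurable W) {a b : ℝ}
    (hWab : ∀ x, W x ∈ Set.Icc a b) (L : ℕ) {s : ℝ} (hs : 0 ≤ s) :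
    (Measure.pi fun _ : Fin L => μ).real {v | L * s ≤ ∑ i, (W (v i) - μ[W])}
      ≤ Real.exp (-(2 * L * s ^ 2 / (b - a) ^ 2)) := by
  have hsubG (i : Fin L) : HasSubgaussianMGF (fun v : Fin L → κ => W (v i) - μ[W])
      ((‖b - a‖₊ / 2) ^ 2) (Measure.pi fun _ => μ) :=
    HasSubgaussianMGF.of_map (X := fun x => W x - μ[W]) (measurable_pi_apply i).aemeasurable
      (by rw [(measurePreserving_eval (fun _ => μ) i).map_eq]
          exact hasSubgaussianMGF_of_mem_Icc hW.aemeasurable (ae_of_all _ hWab))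
  have hindep := iIndepFun_pi (μ := fun _ : Fin L => μ) (X := fun _ x => W x - μ[W])
    fun _ => (hW.sub_const _).aemeasurable
  convert HasSubgaussianMGF.measure_sum_ge_le_of_iIndepFun hindep (s := univ)
    (fun i _ => hsubG i) (ε := L * s) (by positivity) using 3
  push_cast
  rw [sum_const, card_univ, Fintype.card_fin, nsmul_eq_mul, Real.norm_eq_abs, div_pow, sq_abs]
  rcases eq_or_ne (L : ℝ) 0 with hL | hL
  · simp [hL]
  rcases eq_or_ne (b - a) 0 with hab | hab
  · simp [hab]
  field_simp

end Hoeffding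

noncomputable def selfNormAvg {κ : Type*} (z f : κ → ℝ) {L : ℕ} (v : Fin L → κ) : ℝ :=
  (∑ i, z (v i) * f (v i)) / ∑ i, z (v i)

section SelfNormalized

variable {κ : Type*} {z f : κ → ℝ}

theorem selfNormAvg_le_one (hz : ∀ x, 0 ≤ z x) (hf : ∀ x, f x ≤ 1) {L : ℕ} (v : Fin L → κ) :
    selfNormAvg z f v ≤ 1 :=
  div_le_one_of_le₀ (sum_le_sum fun _ _ => mul_le_of_le_one_right (hz _) (hf _))
    (sum_nonneg fun _ _ => hz _)

theorem selfNormAvg_one_sub (hz : ∀ x, 0 < z x) {L : ℕ} [NeZero L] (v : Fin L → κ) :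
    selfNormAvg z (fun x => 1 - f x) v = 1 - selfNormAvg z f v := by
  have hD : 0 < ∑ i, z (v i) := sum_pos (fun i _ => hz _) univ_nonempty
  simp only [selfNormAvg, mul_one_sub, sum_sub_distrib]
  field_simp

variable [MeasurableSpace κ] {μ : Measure κ} [IsProbabilityMeasure μ]

theorem integrable_mul_of_mem_Icc (hzm : Measurable z) (hfm : Measurable f) {b : ℝ}
    (hz : ∀ x, z x ∈ Set.Icc 0 b) (hf : ∀ x, f x ∈ Set.Icc (0 : ℝ) 1) : Integrable (z * f) μ :=
  .of_mem_Icc 0 b (hzm.mul hfm).aemeasurable (ae_of_all _ fun x =>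
    ⟨mul_nonneg (hz x).1 (hf x).1, (mul_le_of_le_one_right (hz x).1 (hf x).2).trans (hz x).2⟩)

theorem measureReal_pi_selfNormAvg_ge_le (hzm : Measurable z) (hfm : Measurable f) {b : ℝ}
    (hz : ∀ x, 0 < z x) (hzb : ∀ x, z x ≤ b) (hf : ∀ x, f x ∈ Set.Icc (0 : ℝ) 1)
    (hz1 : μ[z] = 1) (L : ℕ) {t : ℝ} (ht : 0 < t) :
    (Measure.pi fun _ : Fin L => μ).real {v | μ[z * f] + t ≤ selfNormAvg z f v}
      ≤ Real.exp (-(2 * L * t ^ 2 / b ^ 2)) := by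
  set c := μ[z * f] + t
  rcases lt_or_ge 1 c with hc1 | hc1
  · have hempty : {v : Fin L → κ | c ≤ selfNormAvg z f v} = ∅ :=
      Set.eq_empty_of_forall_notMem fun v hv =>
        hc1.not_ge (hv.trans (selfNormAvg_le_one (fun x => (hz x).le) (fun x => (hf x).2) v))
    rw [hempty, measureReal_empty]
    positivity
  have hc0 : 0 ≤ c := add_nonneg (integral_nonneg fun x => mul_nonneg (hz x).le (hf x).1) ht.le
  -- `c ≤ selfNormAvg z f v` says that the i.i.d. sum `∑ i, W (v i)` is nonnegative.
  set W : κ → ℝ := fun x => z x * (f x - c)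
  have hWmean : μ[W] = -t := by
    have hz_int : Integrable z μ :=
      .of_mem_Icc 0 b hzm.aemeasurable (ae_of_all _ fun x => ⟨(hz x).le, hzb x⟩)
    have hsplit : μ[W] = μ[z * f] - c * μ[z] := by
      rw [← integral_const_mul, ← integral_sub (integrable_mul_of_mem_Icc hzm hfm
        (fun x => ⟨(hz x).le, hzb x⟩) hf) (hz_int.const_mul c)]
      congr 1 with x
      simp only [W, Pi.mul_apply]
      ring
    rw [hsplit, hz1]
    ring
  have hWab (x : κ) : W x ∈ Set.Icc (-(c * b)) ((1 - c) * b) :=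
    ⟨by nlinarith [hz x, hzb x, (hf x).1], by nlinarith [hz x, hzb x, (hf x).2]⟩
  have hsub : {v : Fin L → κ | c ≤ selfNormAvg z f v}
      ⊆ {v | L * t ≤ ∑ i, (W (v i) - μ[W])} := by
    intro v (hv : c ≤ selfNormAvg z f v)
    show (L : ℝ) * t ≤ ∑ i, (W (v i) - μ[W])
    rw [hWmean]
    simp only [sub_neg_eq_add, sum_add_distrib, sum_const, card_univ, Fintype.card_fin,
      nsmul_eq_mul, W, mul_sub, sum_sub_distrib, ← sum_mul]
    rcases Nat.eq_zero_or_pos L with hL | hL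
    · subst hL; simp
    have hD : 0 < ∑ i, z (v i) := sum_pos (fun i _ => hz _) (univ_nonempty_iff.mpr ⟨⟨0, hL⟩⟩)
    linarith [(le_div_iff₀ hD).mp hv]
  calc _ ≤ _ := measureReal_mono hsub
    _ ≤ _ := measureReal_pi_sum_sub_integral_ge_le (hzm.mul (hfm.sub_const c)) hWab L ht.le
    _ = _ := by congr 4; ring

theorem measureReal_pi_abs_selfNormAvg_sub_ge_le (hzm : Measurable z) (hfm : Measurable f)
    {b : ℝ} (hz : ∀ x, 0 < z x) (hzb : ∀ x, z x ≤ b) (hf : ∀ x, f x ∈ Set.Icc (0 : ℝ) 1)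
    (hz1 : μ[z] = 1) (L : ℕ) {t : ℝ} (ht : 0 < t) :
    (Measure.pi fun _ : Fin L => μ).real {v | t ≤ |selfNormAvg z f v - μ[z * f]|}
      ≤ 2 * Real.exp (-(2 * L * t ^ 2 / b ^ 2)) := by
  rcases Nat.eq_zero_or_pos L with hL | hL
  · subst hL
    simpa using (measureReal_le_one.trans one_le_two : _ ≤ (2 : ℝ))
  have : NeZero L := ⟨hL.ne'⟩
  have hmean_compl : μ[z * fun x => 1 - f x] = 1 - μ[z * f] := by
    have hz_int : Integrable z μ :=
      .of_mem_Icc 0 b hzm.aemeasurable (ae_of_all _ fun x => ⟨(hz x).le, hzb x⟩)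
    have hsplit : μ[z * fun x => 1 - f x] = μ[z] - μ[z * f] := by
      rw [← integral_sub hz_int (integrable_mul_of_mem_Icc hzm hfm
        (fun x => ⟨(hz x).le, hzb x⟩) hf)]
      congr 1 with x
      simp only [Pi.mul_apply, mul_one_sub]
    rw [hsplit, hz1]
  -- The lower tail of `f` is the upper tail of `1 - f`.
  have hsub : {v : Fin L → κ | t ≤ |selfNormAvg z f v - μ[z * f]|}
      ⊆ {v | μ[z * f] + t ≤ selfNormAvg z f v}
        ∪ {v | μ[z * fun x => 1 - f x] + t ≤ selfNormAvg z (fun x => 1 - f x) v} := by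
    intro v (hv : t ≤ |selfNormAvg z f v - μ[z * f]|)
    refine (le_abs'.mp hv).symm.imp (fun h => ?_) (fun h => ?_)
    · show μ[z * f] + t ≤ selfNormAvg z f v
      linarith
    · show μ[z * fun x => 1 - f x] + t ≤ selfNormAvg z (fun x => 1 - f x) v
      rw [hmean_compl, selfNormAvg_one_sub hz]
      linarith
  calc _ ≤ _ := measureReal_mono hsub
    _ ≤ _ := measureReal_union_le _ _
    _ ≤ _ := add_le_add
        (measureReal_pi_selfNormAvg_ge_le hzm hfm hz hzb hf hz1 L ht)
        (measureReal_pi_selfNormAvg_ge_le hzm (measurable_const.sub hfm) hz hzb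
          (fun x => ⟨sub_nonneg.mpr (hf x).2, sub_le_self _ (hf x).1⟩) hz1 L ht)
    _ = _ := (two_mul _).symm

theorem measureReal_pi_exists_abs_selfNormAvg_sub_ge_le {ι : Type*} [Fintype ι]
    {f : ι → κ → ℝ} (hzm : Measurable z) (hfm : ∀ j, Measurable (f j)) {b : ℝ}
    (hz : ∀ x, 0 < z x) (hzb : ∀ x, z x ≤ b) (hf : ∀ j x, f j x ∈ Set.Icc (0 : ℝ) 1)
    (hz1 : μ[z] = 1) (L : ℕ) {t : ℝ} (ht : 0 < t) :
    (Measure.pi fun _ : Fin L => μ).real {v | ∃ j, t ≤ |selfNormAvg z (f j) v - μ[z * f j]|}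
      ≤ Fintype.card ι * (2 * Real.exp (-(2 * L * t ^ 2 / b ^ 2))) := by
  rw [Set.ofPred_exists]
  refine (measureReal_iUnion_fintype_le _).trans ?_
  simpa using sum_le_sum fun j (_ : j ∈ univ) =>
    measureReal_pi_abs_selfNormAvg_sub_ge_le hzm (hfm j) hz hzb (hf j) hz1 L ht

end SelfNormalized

theorem integral_div_mul_eq_sum {κ : Type*} [Fintype κ] [MeasurableSpace κ]
    [MeasurableSingletonClass κ] {μ : Measure κ} [IsFiniteMeasure μ] {R : κ → ℝ}
    (hμ : ∀ x, μ.real {x} = R x) (hR : ∀ x, R x ≠ 0) (w f : κ → ℝ) :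
    ∫ x, w x / R x * f x ∂μ = ∑ x, w x * f x := by
  rw [integral_fintype .of_finite]
  refine sum_congr rfl fun x _ => ?_
  rw [hμ, smul_eq_mul]
  field_simp [hR x]

/-- The `X i j` need not be measurable: the inequality `≤` only uses subadditivity of `P` over
the cells of the finite sample space, and `≥` follows by applying it to `Eᶜ`. -/
theorem measure_preimage_eq_pi_pi {Ω : Type*} [MeasurableSpace Ω] {P : Measure Ω}
    [IsProbabilityMeasure P] {ι : Type*} [Fintype ι] {J : ι → Type*} [∀ i, Fintype (J i)]
    {κ : ι → Type*} [∀ i, Fintype (κ i)] [∀ i, MeasurableSpace (κ i)]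
    [∀ i, MeasurableSingletonClass (κ i)] {μ : ∀ i, Measure (κ i)}
    [∀ i, IsProbabilityMeasure (μ i)] {X : ∀ i, J i → Ω → κ i}
    (hX : iIndepFun (fun p : (i : ι) × J i => X p.1 p.2) P)
    (hlaw : ∀ i j x, P (X i j ⁻¹' {x}) = μ i {x}) (E : Set (∀ i, J i → κ i)) :
    P {ω | (fun i j => X i j ω) ∈ E} = Measure.pi (fun i => Measure.pi fun _ : J i => μ i) E := by
  classical
  set ν := Measure.pi fun i => Measure.pi fun _ : J i => μ i
  have hcell (c : ∀ i, J i → κ i) : P {ω | (fun i j => X i j ω) = c} = ν {c} := by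
    have hcell_eq : {ω | (fun i j => X i j ω) = c}
        = ⋂ p ∈ (univ : Finset ((i : ι) × J i)), X p.1 p.2 ⁻¹' {c p.1 p.2} := by
      ext ω
      simp [funext_iff, Sigma.forall]
    rw [hcell_eq, iIndepFun_iff_measure_inter_preimage_eq_mul.mp hX _
      fun p _ => measurableSet_singleton _]
    simp [ν, hlaw, Fintype.prod_sigma]
  have hle (E : Set (∀ i, J i → κ i)) : P {ω | (fun i j => X i j ω) ∈ E} ≤ ν E :=
    calc P {ω | (fun i j => X i j ω) ∈ E}
        ≤ P (⋃ c ∈ E.toFinset, {ω | (fun i j => X i j ω) = c}) :=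
          measure_mono fun ω hω => by simpa using hω
      _ ≤ ∑ c ∈ E.toFinset, P {ω | (fun i j => X i j ω) = c} := measure_biUnion_finset_le _ _
      _ = ν E := by simp_rw [hcell, sum_measure_singleton, Set.coe_toFinset]
  refine le_antisymm (hle E) ?_
  have hcover : 1 ≤ P {ω | (fun i j => X i j ω) ∈ E} + ν Eᶜ :=
    calc 1 = P ({ω | (fun i j => X i j ω) ∈ E} ∪ {ω | (fun i j => X i j ω) ∈ Eᶜ}) := by
          rw [← measure_univ (μ := P)]; congr 1; ext ω; simp [em]
      _ ≤ _ := (measure_union_le _ _).trans (add_le_add_right (hle Eᶜ) _)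
  rw [prob_compl_eq_one_sub (Set.toFinite E).measurableSet] at hcover
  rwa [← ENNReal.sub_sub_cancel ENNReal.one_ne_top prob_le_one, tsub_le_iff_right]

theorem rowStochastic.le_one {A : S → S → ℝ} (hA : rowStochastic A) (i j : S) : A i j ≤ 1 :=
  (single_le_sum (fun k _ => hA.1 i k) (mem_univ j)).trans_eq (hA.2 i)

theorem probVec.le_one {π : S → ℝ} (hπ : probVec π) (i : S) : π i ≤ 1 :=
  (single_le_sum (fun k _ => hπ.1 k) (mem_univ i)).trans_eq hπ.2

theorem abs_log_sub_log_le {θ a c : ℝ} (hθ : 0 < θ) (ha : a ∈ Set.Icc θ 1)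
    (hc : c ∈ Set.Icc θ 1) : |Real.log a - Real.log c| ≤ |Real.log θ| := by
  have hla := Real.log_le_log hθ ha.1
  have hlc := Real.log_le_log hθ hc.1
  have ha0 := Real.log_nonpos (hθ.le.trans ha.1) ha.2
  have hc0 := Real.log_nonpos (hθ.le.trans hc.1) hc.2
  rw [abs_of_nonpos (hla.trans ha0), abs_le]
  constructor <;> linarith

theorem sum_sum_mul_add_sum_mul_lt {n : ℕ} (hn : 0 < n) {a c : Fin n → Fin n → ℝ}
    {r d : Fin n → ℝ} {t ℓ : ℝ} (hℓ : 0 < ℓ) (ha0 : ∀ i, a i i = 0) (ha : ∀ i j, |a i j| ≤ t)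
    (hc : ∀ i j, |c i j| ≤ ℓ) (hr : ∀ i, |r i| < t) (hd : ∀ i, |d i| ≤ ℓ) :
    ∑ i, ∑ j, a i j * c i j + ∑ i, r i * d i < n ^ 2 * t * ℓ := by
  have hac (i j : Fin n) : a i j * c i j ≤ t * ℓ - if i = j then t * ℓ else 0 := by
    split_ifs with h
    · simp [h, ha0]
    · rw [sub_zero]
      exact (le_abs_self _).trans ((abs_mul _ _).trans_le
        (mul_le_mul (ha i j) (hc i j) (abs_nonneg _) ((abs_nonneg _).trans (ha i j))))
  have hrd (i : Fin n) : r i * d i < t * ℓ :=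
    calc r i * d i ≤ |r i| * ℓ := (le_abs_self _).trans
          ((abs_mul _ _).trans_le (mul_le_mul_of_nonneg_left (hd i) (abs_nonneg _)))
      _ < t * ℓ := mul_lt_mul_of_pos_right (hr i) hℓ
  have hsum_ac : ∑ i, ∑ j, a i j * c i j ≤ n ^ 2 * (t * ℓ) - n * (t * ℓ) :=
    calc ∑ i, ∑ j, a i j * c i j
        ≤ ∑ i : Fin n, ∑ j : Fin n, (t * ℓ - if i = j then t * ℓ else 0) :=
          sum_le_sum fun i _ => sum_le_sum fun j _ => hac i j
      _ = _ := by
          simp only [sum_sub_distrib, sum_const, card_univ, Fintype.card_fin, nsmul_eq_mul,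
            sum_ite_eq, mem_univ, ↓reduceIte]
          ring
  have hsum_rd : ∑ i, r i * d i < n * (t * ℓ) := by
    simpa using sum_lt_sum_of_nonempty (univ_nonempty_iff.mpr ⟨⟨0, hn⟩⟩)
      fun i (_ : i ∈ univ) => hrd i
  linarith

theorem card_mul_exp_lt {n : ℕ} (hn : 0 < n) {T b ℓ ε γ : ℝ} {L : ℕ} (hT : 0 < T) (hb : 0 < b)
    (hℓ : 0 < ℓ) (hε : 0 < ε) (hγ0 : 0 < γ) (hγ1 : γ < 1)
    (hL : 2 * T ^ 2 * n ^ 4 * b ^ 2 * ℓ ^ 2 / ε ^ 2 * Real.log (2 * n ^ 2 / γ) ≤ L) :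
    ((n : ℝ) ^ 2 + n) * (2 * Real.exp (-(2 * L * (ε / (T * n ^ 2 * ℓ)) ^ 2 / b ^ 2))) < γ := by
  have hn1 : (1 : ℝ) ≤ n := Nat.one_le_cast.mpr hn
  set β := Real.log (2 * n ^ 2 / γ)
  set E := γ / (2 * n ^ 2)
  have hE0 : 0 < E := by positivity
  have hE1 : E < 1 / 2 := by
    rw [div_lt_div_iff₀ (by positivity) two_pos]; nlinarith
  have hβ : Real.exp (-β) = E := by
    rw [Real.exp_neg, Real.exp_log (by positivity), inv_div]
  have hexponent : 4 * β ≤ 2 * L * (ε / (T * n ^ 2 * ℓ)) ^ 2 / b ^ 2 := by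
    have hscale : 2 * T ^ 2 * n ^ 4 * b ^ 2 * ℓ ^ 2 / ε ^ 2 * β
        * (2 * (ε / (T * n ^ 2 * ℓ)) ^ 2 / b ^ 2) = 4 * β := by
      field_simp
      ring
    calc 4 * β = _ := hscale.symm
      _ ≤ L * (2 * (ε / (T * n ^ 2 * ℓ)) ^ 2 / b ^ 2) :=
          mul_le_mul_of_nonneg_right hL (by positivity)
      _ = _ := by ring
  have htail : Real.exp (-(2 * L * (ε / (T * n ^ 2 * ℓ)) ^ 2 / b ^ 2)) ≤ E ^ 4 :=
    calc _ ≤ Real.exp (-(4 * β)) := Real.exp_le_exp.mpr (neg_le_neg hexponent)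
      _ = E ^ 4 := by rw [← hβ, ← Real.exp_nat_mul]; ring_nf
  have hE3 : 2 * E ^ 3 < 1 := by
    have := pow_lt_pow_left₀ hE1 hE0.le three_ne_zero
    linarith [show ((1 : ℝ) / 2) ^ 3 = 1 / 8 by norm_num]
  calc _ ≤ (2 * (n : ℝ) ^ 2) * (2 * E ^ 4) := by gcongr; nlinarith
    _ = 2 * n ^ 2 * E * (2 * E ^ 3) := by ring
    _ < 2 * n ^ 2 * E * 1 := by gcongr
    _ = γ := by simp only [E]; field_simp

theorem one_sub_rpow_inv_mem_Ioo {δ : ℝ} (hδ : δ ∈ Set.Ioo (0 : ℝ) 1) {T : ℕ} (hT : 0 < T) :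
    1 - (1 - δ) ^ (T : ℝ)⁻¹ ∈ Set.Ioo (0 : ℝ) 1 := by
  have h0 : 0 < 1 - δ := sub_pos.mpr hδ.2
  have h1 : 1 - δ < 1 := sub_lt_self 1 hδ.1
  constructor
  · linarith [Real.rpow_lt_one h0.le h1 (by positivity : (0 : ℝ) < (T : ℝ)⁻¹)]
  · linarith [Real.rpow_pos_of_pos h0 (T : ℝ)⁻¹]

section Model

variable {α : Type*}

section Statistics

variable {n : ℕ} {A : α → α → ℝ} {π : α → ℝ} {y : Fin n → α}

theorem lik_pos (hA : ∀ i j, 0 < A i j) (hπ : ∀ i, 0 < π i) (τ : Equiv.Perm (Fin n)) :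
    0 < lik A π y τ :=
  prod_pos fun i _ => by split_ifs <;> simp only [hA, hπ]

theorem post_pos (hA : ∀ i j, 0 < A i j) (hπ : ∀ i, 0 < π i) (τ : Equiv.Perm (Fin n)) :
    0 < post A π y τ :=
  div_pos (lik_pos hA hπ τ) (sum_pos (fun σ _ => lik_pos hA hπ σ) univ_nonempty)

theorem sum_post (hA : ∀ i j, 0 < A i j) (hπ : ∀ i, 0 < π i) :
    ∑ τ : Equiv.Perm (Fin n), post A π y τ = 1 := by
  simp only [post, ← sum_div]
  exact div_self (sum_pos (fun σ _ => lik_pos hA hπ σ) univ_nonempty).ne'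

theorem astat_self (t : Fin n) (τ : Equiv.Perm (Fin n)) : astat t t τ = 0 :=
  sum_eq_zero fun s _ => if_neg fun ⟨hs, h1, h2⟩ => by
    have := congrArg Fin.val (τ.injective (h1.trans h2.symm))
    simp only at this
    omega

theorem astat_mem_Icc (t' t'' : Fin n) (τ : Equiv.Perm (Fin n)) :
    astat t' t'' τ ∈ Set.Icc (0 : ℝ) 1 := by
  refine ⟨sum_nonneg fun _ _ => by positivity, ?_⟩
  calc astat t' t'' τ ≤ ∑ s, if τ s = t' then (1 : ℝ) else 0 :=
        sum_le_sum fun s _ => by split_ifs <;> simp_all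
    _ = ∑ u, if u = t' then (1 : ℝ) else 0 := Equiv.sum_comp τ fun u => if u = t' then 1 else 0
    _ = 1 := by simp

theorem rstat_mem_Icc (hn : 0 < n) (t' : Fin n) (τ : Equiv.Perm (Fin n)) :
    rstat hn t' τ ∈ Set.Icc (0 : ℝ) 1 := by
  unfold rstat; split_ifs <;> simp

theorem isAvg_eq_selfNormAvg (z f : Equiv.Perm (Fin n) → ℝ) (L : ℕ)
    (s : ℕ → Equiv.Perm (Fin n)) : isAvg z f L s = selfNormAvg z f fun i : Fin L => s i := by
  simp only [isAvg, selfNormAvg, Fin.sum_univ_eq_sum_range (fun k => z (s k) * f (s k)),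
    Fin.sum_univ_eq_sum_range (fun k => z (s k))]

end Statistics

def goodSamples {n : ℕ} (hn : 0 < n) (y : Fin n → α) (A' : α → α → ℝ) (π' : α → ℝ)
    (R : Equiv.Perm (Fin n) → ℝ) (t : ℝ) (L : ℕ) : Set (Fin L → Equiv.Perm (Fin n)) :=
  {v | (∀ t' t'', |selfNormAvg (fun σ => post A' π' y σ / R σ) (astat t' t'') v
      - abar A' π' y t' t''| < t) ∧
    ∀ t', |selfNormAvg (fun σ => post A' π' y σ / R σ) (rstat hn t') v - rbar A' π' hn y t'| < t}

theorem Qaux_sub_sub_eq {T : ℕ} {N : Fin T → ℕ} (y : ∀ m, Fin (N m) → α)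
    (a₁ a₂ : ∀ m, Fin (N m) → Fin (N m) → ℝ) (r₁ r₂ : ∀ m, Fin (N m) → ℝ)
    (A₁ A₂ : α → α → ℝ) (π₁ π₂ : α → ℝ) :
    Qaux y a₁ r₁ A₁ π₁ - Qaux y a₁ r₁ A₂ π₂ - (Qaux y a₂ r₂ A₁ π₁ - Qaux y a₂ r₂ A₂ π₂)
      = ∑ m, ((∑ t', ∑ t'', (a₁ m t' t'' - a₂ m t' t'') *
          (Real.log (A₁ (y m t'') (y m t')) - Real.log (A₂ (y m t'') (y m t')))) +
        ∑ t', (r₁ m t' - r₂ m t') * (Real.log (π₁ (y m t')) - Real.log (π₂ (y m t')))) := by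
  simp only [Qaux, ← sum_sub_distrib]
  refine sum_congr rfl fun m _ => ?_
  simp only [sub_mul, mul_sub, sum_sub_distrib]
  ring

theorem Qaux_sub_sub_lt {T : ℕ} (hT : 0 < T) {N : Fin T → ℕ} (hN : ∀ m, 0 < N m)
    (y : ∀ m, Fin (N m) → α) {a₁ a₂ : ∀ m, Fin (N m) → Fin (N m) → ℝ}
    {r₁ r₂ : ∀ m, Fin (N m) → ℝ} {A₁ A₂ : α → α → ℝ} {π₁ π₂ : α → ℝ} {θ ε : ℝ} (hθ0 : 0 < θ)
    (hθ1 : θ < 1) (hA₁ : ∀ i j, A₁ i j ∈ Set.Icc θ 1) (hA₂ : ∀ i j, A₂ i j ∈ Set.Icc θ 1)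
    (hπ₁ : ∀ i, π₁ i ∈ Set.Icc θ 1) (hπ₂ : ∀ i, π₂ i ∈ Set.Icc θ 1)
    (hdiag : ∀ m t, a₁ m t t = a₂ m t t)
    (ha : ∀ m t' t'', |a₁ m t' t'' - a₂ m t' t''| < ε / (T * N m ^ 2 * |Real.log θ|))
    (hr : ∀ m t', |r₁ m t' - r₂ m t'| < ε / (T * N m ^ 2 * |Real.log θ|)) :
    Qaux y a₁ r₁ A₁ π₁ - Qaux y a₁ r₁ A₂ π₂ - (Qaux y a₂ r₂ A₁ π₁ - Qaux y a₂ r₂ A₂ π₂) < ε := by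
  have hℓ : 0 < |Real.log θ| := abs_pos.mpr (Real.log_neg hθ0 hθ1).ne
  rw [Qaux_sub_sub_eq]
  calc _ < ∑ m : Fin T, (N m : ℝ) ^ 2 * (ε / (T * N m ^ 2 * |Real.log θ|)) * |Real.log θ| :=
        sum_lt_sum_of_nonempty (univ_nonempty_iff.mpr ⟨⟨0, hT⟩⟩) fun m _ =>
          sum_sum_mul_add_sum_mul_lt (hN m) hℓ (fun t => sub_eq_zero.mpr (hdiag m t))
            (fun t' t'' => (ha m t' t'').le)
            (fun t' t'' => abs_log_sub_log_le hθ0 (hA₁ _ _) (hA₂ _ _)) (hr m)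
            (fun t' => abs_log_sub_log_le hθ0 (hπ₁ _) (hπ₂ _))
    _ = ∑ _m : Fin T, ε / T := sum_congr rfl fun m _ => by
        field_simp [(Nat.cast_pos.mpr (hN m)).ne']
    _ = ε := by
      rw [sum_const, card_univ, Fintype.card_fin, nsmul_eq_mul]
      field_simp

theorem Qhat_sub_Qexact_lt {T : ℕ} (hT : 0 < T) {N : Fin T → ℕ} (hN : ∀ m, 0 < N m)
    (y : ∀ m, Fin (N m) → α) {A' A : α → α → ℝ} {π' π : α → ℝ} {θ ε : ℝ} (hθ0 : 0 < θ)
    (hθ1 : θ < 1) (hA' : ∀ i j, A' i j ∈ Set.Icc θ 1) (hA : ∀ i j, A i j ∈ Set.Icc θ 1)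
    (hπ' : ∀ i, π' i ∈ Set.Icc θ 1) (hπ : ∀ i, π i ∈ Set.Icc θ 1)
    (R : ∀ m, Equiv.Perm (Fin (N m)) → ℝ) (L : Fin T → ℕ) (s : ∀ m, ℕ → Equiv.Perm (Fin (N m)))
    (hs : ∀ m, (fun k : Fin (L m) => s m k) ∈
      goodSamples (hN m) (y m) A' π' (R m) (ε / (T * N m ^ 2 * |Real.log θ|)) (L m)) :
    (Qhat hN y A' π' R L s A π - Qhat hN y A' π' R L s A' π')
      - (Qexact hN y A' π' A π - Qexact hN y A' π' A' π') < ε := by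
  refine Qaux_sub_sub_lt hT hN y hθ0 hθ1 hA hA' hπ hπ' (fun m t => ?_) (fun m t' t'' => ?_)
    (fun m t' => ?_)
  · simp [isAvg, abar, astat_self]
  · rw [isAvg_eq_selfNormAvg]; exact (hs m).1 t' t''
  · rw [isAvg_eq_selfNormAvg]; exact (hs m).2 t'

theorem measureReal_pi_compl_goodSamples_le {n : ℕ} (hn : 0 < n) (y : Fin n → α)
    {A' : α → α → ℝ} {π' : α → ℝ} (hA' : ∀ i j, 0 < A' i j) (hπ' : ∀ i, 0 < π' i)
    [MeasurableSpace (Equiv.Perm (Fin n))] [DiscreteMeasurableSpace (Equiv.Perm (Fin n))]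
    {μ : Measure (Equiv.Perm (Fin n))} [IsProbabilityMeasure μ] {R : Equiv.Perm (Fin n) → ℝ}
    (hμ : ∀ σ, μ.real {σ} = R σ) (hR : ∀ σ, 0 < R σ) {b : ℝ}
    (hb : ∀ σ, post A' π' y σ / R σ ≤ b) (L : ℕ) {t : ℝ} (ht : 0 < t) :
    (Measure.pi fun _ : Fin L => μ).real (goodSamples hn y A' π' R t L)ᶜ
      ≤ (n ^ 2 + n) * (2 * Real.exp (-(2 * L * t ^ 2 / b ^ 2))) := by
  set z := fun σ => post A' π' y σ / R σ
  have hz (σ : Equiv.Perm (Fin n)) : 0 < z σ := div_pos (post_pos hA' hπ' σ) (hR σ)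
  have hmean (f : Equiv.Perm (Fin n) → ℝ) : μ[z * f] = ∑ σ, post A' π' y σ * f σ :=
    integral_div_mul_eq_sum hμ (fun σ => (hR σ).ne') _ f
  have hz1 : μ[z] = 1 := by simpa [sum_post hA' hπ'] using hmean 1
  have hsub : (goodSamples hn y A' π' R t L)ᶜ
      ⊆ {v | ∃ p : Fin n × Fin n, t ≤ |selfNormAvg z (astat p.1 p.2) v - μ[z * astat p.1 p.2]|}
        ∪ {v | ∃ t', t ≤ |selfNormAvg z (rstat hn t') v - μ[z * rstat hn t']|} := by
    intro v hv
    simp only [goodSamples, Set.mem_compl_iff, Set.mem_ofPred_eq, not_and_or, not_forall,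
      not_lt] at hv
    simp only [hmean]
    simpa [z, abar, rbar, Prod.exists] using hv
  have hα := measureReal_pi_exists_abs_selfNormAvg_sub_ge_le (μ := μ)
    (f := fun p : Fin n × Fin n => astat p.1 p.2) .of_discrete (fun _ => .of_discrete) hz hb
    (fun p => astat_mem_Icc p.1 p.2) hz1 L ht
  have hr := measureReal_pi_exists_abs_selfNormAvg_sub_ge_le (μ := μ) (f := rstat hn)
    .of_discrete (fun _ => .of_discrete) hz hb (rstat_mem_Icc hn) hz1 L ht
  calc _ ≤ _ := measureReal_mono hsub
    _ ≤ _ := measureReal_union_le _ _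
    _ ≤ _ := add_le_add hα hr
    _ = _ := by simp only [Fintype.card_prod, Fintype.card_fin]; push_cast; ring

theorem one_sub_lt_measureReal_pi_goodSamples {n : ℕ} (hn : 0 < n) (y : Fin n → α)
    {A' : α → α → ℝ} {π' : α → ℝ} (hA' : ∀ i j, 0 < A' i j) (hπ' : ∀ i, 0 < π' i)
    [MeasurableSpace (Equiv.Perm (Fin n))] [DiscreteMeasurableSpace (Equiv.Perm (Fin n))]
    {μ : Measure (Equiv.Perm (Fin n))} [IsProbabilityMeasure μ] {R : Equiv.Perm (Fin n) → ℝ}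
    (hμ : ∀ σ, μ.real {σ} = R σ) (habs : ∀ σ, R σ = 0 → post A' π' y σ = 0) {b : ℝ}
    (hb : b = univ.sup' univ_nonempty fun σ => post A' π' y σ / R σ) {T ℓ ε γ : ℝ} {L : ℕ}
    (hT : 0 < T) (hℓ : 0 < ℓ) (hε : 0 < ε) (hγ : γ ∈ Set.Ioo (0 : ℝ) 1)
    (hL : 2 * T ^ 2 * n ^ 4 * b ^ 2 * ℓ ^ 2 / ε ^ 2 * Real.log (2 * n ^ 2 / γ) ≤ L) :
    1 - γ < (Measure.pi fun _ : Fin L => μ).real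
      (goodSamples hn y A' π' R (ε / (T * n ^ 2 * ℓ)) L) := by
  have hR (σ : Equiv.Perm (Fin n)) : 0 < R σ :=
    (hμ σ ▸ measureReal_nonneg).lt_of_ne fun h => (post_pos hA' hπ' σ).ne' (habs σ h.symm)
  have hzb (σ : Equiv.Perm (Fin n)) : post A' π' y σ / R σ ≤ b :=
    hb ▸ le_sup' (fun τ => post A' π' y τ / R τ) (mem_univ σ)
  have hbad := measureReal_pi_compl_goodSamples_le hn y hA' hπ' hμ hR hzb L
    (t := ε / (T * n ^ 2 * ℓ)) (by positivity)
  have htail := card_mul_exp_lt hn hT ((div_pos (post_pos hA' hπ' 1) (hR 1)).trans_le (hzb 1))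
    hℓ hε hγ.1 hγ.2 hL
  rw [probReal_compl_eq_one_sub .of_discrete] at hbad
  linarith

end Model

theorem pam_monte_carlo_em_general
    {Ω : Type*} [MeasurableSpace Ω] (Prob : Measure Ω) [IsProbabilityMeasure Prob]
    {S : Type*} [Fintype S]
    {T : ℕ} (hT : 0 < T) {N : Fin T → ℕ} (hN : ∀ m, 0 < N m)
    (y : ∀ m, Fin (N m) → S)
    (A' : S → S → ℝ) (π' : S → ℝ) (hA' : rowStochastic A') (hπ' : probVec π')
    (ε δ θmin : ℝ) (hε : 0 < ε) (hδ : δ ∈ Set.Ioo (0 : ℝ) 1)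
    (hθmin : θmin ∈ Set.Ioo (0 : ℝ) ((Fintype.card S : ℝ)⁻¹))
    (hA'min : ∀ i j, θmin ≤ A' i j) (hπ'min : ∀ i, θmin ≤ π' i)
    (R : ∀ m, Equiv.Perm (Fin (N m)) → ℝ)
    (hRnonneg : ∀ m τ, 0 ≤ R m τ) (hRsum : ∀ m, ∑ τ, R m τ = 1)
    (habs : ∀ m τ, R m τ = 0 → post A' π' (y m) τ = 0)
    (b : Fin T → ℝ)
    (hb : ∀ m, b m = Finset.univ.sup' Finset.univ_nonempty
      (fun τ => post A' π' (y m) τ / R m τ))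
    (L : Fin T → ℕ)
    (hL : ∀ m, 2 * (T : ℝ) ^ 2 * (N m : ℝ) ^ 4 * b m ^ 2 * |Real.log θmin| ^ 2 / ε ^ 2 *
        Real.log (2 * (N m : ℝ) ^ 2 / (1 - (1 - δ) ^ ((T : ℝ)⁻¹))) ≤ (L m : ℝ))
    (τsamp : ∀ m : Fin T, ℕ → Ω → Equiv.Perm (Fin (N m)))
    (hlaw : ∀ m i σ, Prob (τsamp m i ⁻¹' {σ}) = ENNReal.ofReal (R m σ))
    (hindep : iIndepFun
      (m := fun p : (m : Fin T) × ℕ => (⊤ : MeasurableSpace (Equiv.Perm (Fin (N p.1)))))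
      (fun p ω => τsamp p.1 p.2 ω) Prob)
    (Ahat : Ω → S → S → ℝ) (πhat : Ω → S → ℝ)
    (hAhat : ∀ ω, rowStochastic (Ahat ω) ∧ ∀ i j, θmin ≤ Ahat ω i j)
    (hπhat : ∀ ω, probVec (πhat ω) ∧ ∀ i, θmin ≤ πhat ω i) :
    1 - δ < (Prob {ω |
      (Qhat hN y A' π' R L (fun m k => τsamp m k ω) (Ahat ω) (πhat ω) -
          Qhat hN y A' π' R L (fun m k => τsamp m k ω) A' π') -
        (Qexact hN y A' π' (Ahat ω) (πhat ω) - Qexact hN y A' π' A' π')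
      < ε}).toReal := by
  obtain ⟨hθ0, hθS⟩ := hθmin
  have hθ1 : θmin < 1 := hθS.trans_le (Nat.cast_inv_le_one _)
  have hA'pos i j : 0 < A' i j := hθ0.trans_le (hA'min i j)
  have hπ'pos i : 0 < π' i := hθ0.trans_le (hπ'min i)
  set γ := 1 - (1 - δ) ^ (T : ℝ)⁻¹ with hγ
  have hγ01 := one_sub_rpow_inv_mem_Ioo hδ hT
  -- the discrete σ-algebra, with respect to which `hindep` is stated
  let _ : ∀ n, MeasurableSpace (Equiv.Perm (Fin n)) := fun _ => ⊤
  let μ m : Measure (Equiv.Perm (Fin (N m))) :=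
    (PMF.ofFintype (fun σ => ENNReal.ofReal (R m σ)) (by
      rw [← ENNReal.ofReal_sum_of_nonneg fun σ _ => hRnonneg m σ, hRsum m,
        ENNReal.ofReal_one])).toMeasure
  have hμ m σ : μ m {σ} = ENNReal.ofReal (R m σ) :=
    PMF.toMeasure_apply_singleton _ σ (measurableSet_singleton σ)
  let good m := goodSamples (hN m) (y m) A' π' (R m) (ε / (T * N m ^ 2 * |Real.log θmin|)) (L m)
  calc 1 - δ = ∏ _m : Fin T, (1 - γ) := by
        rw [prod_const, card_univ, Fintype.card_fin, hγ, sub_sub_cancel,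
          Real.rpow_inv_natCast_pow (sub_pos.mpr hδ.2).le hT.ne']
    _ < ∏ m, (Measure.pi fun _ : Fin (L m) => μ m).real (good m) :=
        prod_lt_prod_of_nonempty (fun _ _ => sub_pos.mpr hγ01.2)
          (fun m _ => one_sub_lt_measureReal_pi_goodSamples (hN m) (y m) hA'pos hπ'pos
            (fun σ => by simp [measureReal_def, hμ, hRnonneg]) (habs m) (hb m)
            (Nat.cast_pos.mpr hT) (abs_pos.mpr (Real.log_neg hθ0 hθ1).ne) hε hγ01 (hL m))
          (univ_nonempty_iff.mpr ⟨⟨0, hT⟩⟩)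
    _ = Prob.real {ω | (fun m (k : Fin (L m)) => τsamp m k ω) ∈ Set.univ.pi good} := by
        rw [measureReal_def, measure_preimage_eq_pi_pi (J := fun m => Fin (L m))
          (X := fun m k ω => τsamp m k ω)
          (hindep.precomp (Function.injective_id.sigma_map fun _ => Fin.val_injective))
          (fun m k σ => (hlaw m k σ).trans (hμ m σ).symm), Measure.pi_pi, ENNReal.toReal_prod]
        rfl
    _ ≤ _ := measureReal_mono fun ω hω => Qhat_sub_Qexact_lt hT hN y hθ0 hθ1
        (fun i j => ⟨hA'min i j, hA'.le_one i j⟩)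
        (fun i j => ⟨(hAhat ω).2 i j, (hAhat ω).1.le_one i j⟩)
        (fun i => ⟨hπ'min i, hπ'.le_one i⟩) (fun i => ⟨(hπhat ω).2 i, (hπhat ω).1.le_one i⟩)
        R L (fun m k => τsamp m k ω) fun m => hω m (Set.mem_univ m)

/-- Theorem 1, PAM: probably approximately monotonic Monte Carlo
EM update.  If the parameters are bounded below by `θ_min` and
`L_m ≥ (2 T² N_m⁴ b_m² |log θ_min|² / ε²) log(2 N_m² / (1 − (1−δ)^{1/T}))`
importance samples are used for the `m`-th observation, then
`Δ̂(θ̂) − Δ(θ̂) < ε` with probability greater than `1 − δ`. -/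
theorem pam_monte_carlo_em
    {Ω : Type*} [MeasurableSpace Ω] (Prob : Measure Ω) [IsProbabilityMeasure Prob]
    {S : Type*} [Fintype S] [Nonempty S]
    {T : ℕ} (hT : 0 < T) {N : Fin T → ℕ} (hN : ∀ m, 0 < N m)
    (y : ∀ m, Fin (N m) → S) (hy : ∀ m, Function.Injective (y m))
    (A' : S → S → ℝ) (π' : S → ℝ) (hA' : rowStochastic A') (hπ' : probVec π')
    (ε δ θmin : ℝ) (hε : 0 < ε) (hδ : δ ∈ Set.Ioo (0 : ℝ) 1)
    (hθmin : θmin ∈ Set.Ioo (0 : ℝ) ((Fintype.card S : ℝ)⁻¹))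
    (hA'min : ∀ i j, θmin ≤ A' i j) (hπ'min : ∀ i, θmin ≤ π' i)
    (R : ∀ m, Equiv.Perm (Fin (N m)) → ℝ)
    (hRnonneg : ∀ m τ, 0 ≤ R m τ) (hRsum : ∀ m, ∑ τ, R m τ = 1)
    (habs : ∀ m τ, R m τ = 0 → post A' π' (y m) τ = 0)
    (b : Fin T → ℝ)
    (hb : ∀ m, b m = Finset.univ.sup' Finset.univ_nonempty
      (fun τ => post A' π' (y m) τ / R m τ))
    (L : Fin T → ℕ)
    (hL : ∀ m, 2 * (T : ℝ) ^ 2 * (N m : ℝ) ^ 4 * b m ^ 2 * |Real.log θmin| ^ 2 / ε ^ 2 *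
        Real.log (2 * (N m : ℝ) ^ 2 / (1 - (1 - δ) ^ ((T : ℝ)⁻¹))) ≤ (L m : ℝ))
    (τsamp : ∀ m : Fin T, ℕ → Ω → Equiv.Perm (Fin (N m)))
    (hlaw : ∀ m i σ, Prob (τsamp m i ⁻¹' {σ}) = ENNReal.ofReal (R m σ))
    (hindep : iIndepFun
      (m := fun p : (m : Fin T) × ℕ => (⊤ : MeasurableSpace (Equiv.Perm (Fin (N p.1)))))
      (fun p ω => τsamp p.1 p.2 ω) Prob)
    (Ahat : Ω → S → S → ℝ) (πhat : Ω → S → ℝ)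
    (hAhat : ∀ ω, rowStochastic (Ahat ω) ∧ ∀ i j, θmin ≤ Ahat ω i j)
    (hπhat : ∀ ω, probVec (πhat ω) ∧ ∀ i, θmin ≤ πhat ω i)
    (hargmax : ∀ ω (A : S → S → ℝ) (π : S → ℝ), rowStochastic A → probVec π →
      (∀ i j, θmin ≤ A i j) → (∀ i, θmin ≤ π i) →
      Qhat hN y A' π' R L (fun m k => τsamp m k ω) A π ≤
        Qhat hN y A' π' R L (fun m k => τsamp m k ω) (Ahat ω) (πhat ω)) :
    1 - δ < (Prob {ω |
      (Qhat hN y A' π' R L (fun m k => τsamp m k ω) (Ahat ω) (πhat ω) -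
          Qhat hN y A' π' R L (fun m k => τsamp m k ω) A' π') -
        (Qexact hN y A' π' (Ahat ω) (πhat ω) - Qexact hN y A' π' A' π')
      < ε}).toReal :=
  pam_monte_carlo_em_general Prob hT hN y A' π' hA' hπ' ε δ θmin hε hδ hθmin hA'min hπ'min R
    hRnonneg hRsum habs b hb L hL τsamp hlaw hindep Ahat πhat hAhat hπhat

end NICO
end

section
/- Under the stated assumptions, for any δ ∈ (0,1), with probability greater than 1 − δ, μ̂_L − μ < √( 2 b² log(2/δ) / L ). -/
/-!
Put `c = μ + ε`. If `c > 1` there is nothing to prove, because `μ̂_L ≤ 1`. If `c ≤ 1`, the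
estimate can only fail when `∑ Zᵢ (Xᵢ - c) ≥ 0`. The summands `Zᵢ (Xᵢ - c)` are independent,
have mean `μ - c = -ε` and take values in `[-c b, (1 - c) b]`, an interval of length `b`, so by
Hoeffding's inequality this happens with probability at most `exp (-2 L ε² / b²) = (δ / 2)⁴ < δ`.
-/

open Finset MeasureTheory ProbabilityTheory Real

lemma mul_sub_mem_Icc {z x b c : ℝ} (hz : z ∈ Set.Icc 0 b) (hx : x ∈ Set.Icc 0 1)
    (hc : c ∈ Set.Icc 0 1) : z * (x - c) ∈ Set.Icc (-(c * b)) ((1 - c) * b) := by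
  obtain ⟨hz0, hzb⟩ := hz
  obtain ⟨hx0, hx1⟩ := hx
  obtain ⟨hc0, hc1⟩ := hc
  constructor <;> nlinarith

lemma div_lt_of_lt_mul_of_nonneg {a s c : ℝ} (ha : 0 ≤ a) (hs : 0 ≤ s) (h : a < c * s) :
    a / s < c := by
  rcases hs.eq_or_lt with rfl | hs
  · rw [mul_zero] at h
    linarith
  · rwa [div_lt_iff₀ hs]

section WeightedMean

variable {ι : Type*} {s : Finset ι} {z x : ι → ℝ}

lemma sum_mul_div_sum_le_one (hz : ∀ i ∈ s, 0 ≤ z i) (hx : ∀ i ∈ s, x i ≤ 1) :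
    (∑ i ∈ s, z i * x i) / ∑ i ∈ s, z i ≤ 1 :=
  div_le_one_of_le₀ (sum_le_sum fun i hi ↦ mul_le_of_le_one_right (hz i hi) (hx i hi))
    (sum_nonneg hz)

lemma sum_mul_div_sum_lt_of_sum_mul_sub_neg {c : ℝ} (hz : ∀ i ∈ s, 0 ≤ z i)
    (hx : ∀ i ∈ s, 0 ≤ x i) (h : ∑ i ∈ s, z i * (x i - c) < 0) :
    (∑ i ∈ s, z i * x i) / ∑ i ∈ s, z i < c := by
  refine div_lt_of_lt_mul_of_nonneg (sum_nonneg fun i hi ↦ mul_nonneg (hz i hi) (hx i hi))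
    (sum_nonneg hz) ?_
  simp only [mul_sub, sum_sub_distrib, ← sum_mul] at h
  linarith

end WeightedMean

section Probability

variable {Ω : Type*} [MeasurableSpace Ω] {P : Measure Ω} [IsProbabilityMeasure P]

lemma one_sub_lt_measureReal_of_ae_mem_union {A B : Set Ω} {δ : ℝ}
    (h : ∀ᵐ ω ∂P, ω ∈ A ∪ B) (hB : P.real B < δ) : 1 - δ < P.real A := by
  have hAB : P.real (A ∪ B) = 1 := by
    rw [← probReal_univ (μ := P)]
    exact measureReal_congr (ae_eq_univ.2 (ae_iff.1 h))
  linarith [measureReal_union_le (μ := P) A B]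

lemma integral_mul_sub {X Z : Ω → ℝ} {b c μ : ℝ} (hXm : AEMeasurable X P)
    (hZm : AEMeasurable Z P) (hX : ∀ᵐ ω ∂P, X ω ∈ Set.Icc 0 1)
    (hZ : ∀ᵐ ω ∂P, Z ω ∈ Set.Icc 0 b) (hEZ : ∫ ω, Z ω ∂P = 1)
    (hEZX : ∫ ω, Z ω * X ω ∂P = μ) :
    ∫ ω, Z ω * (X ω - c) ∂P = μ - c := by
  have hZi : Integrable Z P := Integrable.of_mem_Icc 0 b hZm hZ
  have hZXi : Integrable (fun ω ↦ Z ω * X ω) P := by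
    refine Integrable.of_mem_Icc 0 b (hZm.mul hXm) ?_
    filter_upwards [hX, hZ] with ω hx hz
    simpa using mul_sub_mem_Icc hz hx (c := 0) (by simp)
  simp_rw [mul_sub]
  rw [integral_sub hZXi (hZi.mul_const c), integral_mul_const, hEZ, hEZX, one_mul]

lemma hasSubgaussianMGF_mul_sub {X Z : Ω → ℝ} {b c : ℝ}
    (hm : AEMeasurable (fun ω ↦ Z ω * (X ω - c)) P)
    (hX : ∀ᵐ ω ∂P, X ω ∈ Set.Icc 0 1) (hZ : ∀ᵐ ω ∂P, Z ω ∈ Set.Icc 0 b)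
    (hc : c ∈ Set.Icc 0 1) :
    HasSubgaussianMGF (fun ω ↦ Z ω * (X ω - c) - P[fun ω ↦ Z ω * (X ω - c)])
      ((‖b‖₊ / 2) ^ 2) P := by
  have h := hasSubgaussianMGF_of_mem_Icc hm
    (by filter_upwards [hX, hZ] with ω hx hz using mul_sub_mem_Icc hz hx hc)
  rwa [show (1 - c) * b - -(c * b) = b by ring] at h

lemma measureReal_sum_mul_sub_nonneg_le {X Z : ℕ → Ω → ℝ} {b μ ε : ℝ}
    (hmeas : ∀ i, Measurable fun ω ↦ (X i ω, Z i ω))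
    (hindep : iIndepFun (fun i ω ↦ (X i ω, Z i ω)) P)
    (hX : ∀ i, ∀ᵐ ω ∂P, X i ω ∈ Set.Icc 0 1) (hZ : ∀ i, ∀ᵐ ω ∂P, Z i ω ∈ Set.Icc 0 b)
    (hEZ : ∀ i, ∫ ω, Z i ω ∂P = 1) (hEZX : ∀ i, ∫ ω, Z i ω * X i ω ∂P = μ)
    (hε : 0 ≤ ε) (hc : μ + ε ∈ Set.Icc 0 1) (L : ℕ) :
    P.real {ω | 0 ≤ ∑ i ∈ range L, Z i ω * (X i ω - (μ + ε))} ≤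
      exp (-2 * L * ε ^ 2 / b ^ 2) := by
  have hsubG : ∀ i < L,
      HasSubgaussianMGF (fun ω ↦ Z i ω * (X i ω - (μ + ε)) + ε) ((‖b‖₊ / 2) ^ 2) P := by
    intro i _
    have hXm : Measurable (X i) := measurable_fst.comp (hmeas i)
    have hZm : Measurable (Z i) := measurable_snd.comp (hmeas i)
    have h := hasSubgaussianMGF_mul_sub (by fun_prop) (hX i) (hZ i) hc
    rw [integral_mul_sub hXm.aemeasurable hZm.aemeasurable (hX i) (hZ i) (hEZ i) (hEZX i),
      show μ - (μ + ε) = -ε by ring] at h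
    simpa only [sub_neg_eq_add] using h
  have hind : iIndepFun (fun i ω ↦ Z i ω * (X i ω - (μ + ε)) + ε) P :=
    hindep.comp (fun _ p ↦ p.2 * (p.1 - (μ + ε)) + ε) fun _ ↦ by fun_prop
  have hset : {ω | 0 ≤ ∑ i ∈ range L, Z i ω * (X i ω - (μ + ε))} =
      {ω | L * ε ≤ ∑ i ∈ range L, (Z i ω * (X i ω - (μ + ε)) + ε)} := by
    ext ω
    simp [sum_add_distrib]
  rw [hset]
  refine (HasSubgaussianMGF.measure_sum_range_ge_le_of_iIndepFun hind hsubG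
    (mul_nonneg L.cast_nonneg hε)).trans_eq (congrArg exp ?_)
  push_cast
  rw [Real.norm_eq_abs, div_pow, sq_abs]
  rcases eq_or_ne (L : ℝ) 0 with hL | hL
  · simp [hL]
  rcases eq_or_ne b 0 with hb | hb
  · simp [hb]
  field_simp

end Probability

lemma exp_neg_two_mul_sqrt_sq_div_lt {b δ : ℝ} {L : ℕ} (hb : b ≠ 0) (hL : 0 < L)
    (hδ : δ ∈ Set.Ioo 0 1) :
    exp (-2 * L * sqrt (2 * b ^ 2 * log (2 / δ) / L) ^ 2 / b ^ 2) < δ := by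
  obtain ⟨hδ0, hδ1⟩ := hδ
  have hlog : 0 < log (2 / δ) := log_pos (by rw [lt_div_iff₀ hδ0]; linarith)
  have hL' : (0 : ℝ) < L := by exact_mod_cast hL
  rw [sq_sqrt (by positivity)]
  calc exp (-2 * L * (2 * b ^ 2 * log (2 / δ) / L) / b ^ 2)
      = exp (-(4 * log (2 / δ))) := by congr 1; field_simp; ring
    _ ≤ exp (-log (2 / δ)) := by gcongr; linarith
    _ = δ / 2 := by rw [exp_neg, exp_log (by positivity), inv_div]
    _ < δ := by linarith

theorem selfNormalized_IS_additive_concentration_general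
    {Ω : Type*} [MeasurableSpace Ω] (Prob : Measure Ω) [IsProbabilityMeasure Prob]
    (X Z : ℕ → Ω → ℝ) (b μ : ℝ) (hb : 0 < b)
    (hmeas : ∀ i, Measurable fun ω => (X i ω, Z i ω))
    (hindep : iIndepFun
      (fun i ω => (X i ω, Z i ω)) Prob)
    (hX : ∀ i, ∀ᵐ ω ∂Prob, X i ω = 0 ∨ X i ω = 1)
    (hZ : ∀ i, ∀ᵐ ω ∂Prob, Z i ω ∈ Set.Icc 0 b)
    (hEZ : ∀ i, ∫ ω, Z i ω ∂Prob = 1)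
    (hEZX : ∀ i, ∫ ω, Z i ω * X i ω ∂Prob = μ)
    (L : ℕ) (hL : 0 < L) (δ : ℝ) (hδ : δ ∈ Set.Ioo (0 : ℝ) 1) :
    1 - δ < (Prob {ω | (∑ i ∈ range L, Z i ω * X i ω) / (∑ i ∈ range L, Z i ω) - μ
        < Real.sqrt (2 * b ^ 2 * Real.log (2 / δ) / L)}).toReal := by
  set ε := sqrt (2 * b ^ 2 * log (2 / δ) / L)
  have hX' i : ∀ᵐ ω ∂Prob, X i ω ∈ Set.Icc 0 1 :=
    (hX i).mono fun ω h ↦ by rcases h with h | h <;> simp [h]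
  have hμ : 0 ≤ μ := hEZX 0 ▸ integral_nonneg_of_ae
    (by filter_upwards [hX' 0, hZ 0] with ω hx hz using mul_nonneg hz.1 hx.1)
  have hXZ : ∀ᵐ ω ∂Prob, ∀ i, X i ω ∈ Set.Icc 0 1 ∧ Z i ω ∈ Set.Icc 0 b :=
    ae_all_iff.2 fun i ↦ (hX' i).and (hZ i)
  rcases le_or_gt (μ + ε) 1 with hc | hc
  · refine one_sub_lt_measureReal_of_ae_mem_union
      (B := {ω | 0 ≤ ∑ i ∈ range L, Z i ω * (X i ω - (μ + ε))}) ?_ ?_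
    · filter_upwards [hXZ] with ω hω
      refine (lt_or_ge (∑ i ∈ range L, Z i ω * (X i ω - (μ + ε))) 0).imp (fun h ↦ ?_) id
      have := sum_mul_div_sum_lt_of_sum_mul_sub_neg
        (fun i _ ↦ (hω i).2.1) (fun i _ ↦ (hω i).1.1) h
      show _ < ε
      linarith
    · exact (measureReal_sum_mul_sub_nonneg_le hmeas hindep hX' hZ hEZ hEZX (sqrt_nonneg _)
        ⟨by positivity, hc⟩ L).trans_lt (exp_neg_two_mul_sqrt_sq_div_lt hb.ne' hL hδ)
  · refine one_sub_lt_measureReal_of_ae_mem_union (B := ∅) ?_ (by simpa using hδ.1)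
    filter_upwards [hXZ] with ω hω
    left
    have := sum_mul_div_sum_le_one (s := range L)
      (fun i _ ↦ (hω i).2.1) (fun i _ ↦ (hω i).1.2)
    show _ < ε
    linarith

/-- Proposition 1: additive concentration of the self-normalized
importance-sampling estimator.  For i.i.d. pairs `(Xᵢ, Zᵢ)` with `Xᵢ ∈ {0,1}`,
`Zᵢ ∈ [0,b]`, `E[Zᵢ] = 1` and `E[ZᵢXᵢ] = μ`, with probability greater than
`1 − δ` the estimate `μ̂_L = (∑ ZᵢXᵢ)/(∑ Zᵢ)` satisfies
`μ̂_L − μ < √(2 b² log(2/δ) / L)`. -/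
theorem selfNormalized_IS_additive_concentration
    {Ω : Type*} [MeasurableSpace Ω] (Prob : Measure Ω) [IsProbabilityMeasure Prob]
    (X Z : ℕ → Ω → ℝ) (b μ : ℝ) (hb : 0 < b)
    (hmeas : ∀ i, Measurable fun ω => (X i ω, Z i ω))
    (hindep : iIndepFun
      (fun i ω => (X i ω, Z i ω)) Prob)
    (hident : ∀ i, IdentDistrib (fun ω => (X i ω, Z i ω)) (fun ω => (X 0 ω, Z 0 ω)) Prob Prob)
    (hX : ∀ i, ∀ᵐ ω ∂Prob, X i ω = 0 ∨ X i ω = 1)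
    (hZ : ∀ i, ∀ᵐ ω ∂Prob, Z i ω ∈ Set.Icc 0 b)
    (hEZ : ∀ i, ∫ ω, Z i ω ∂Prob = 1)
    (hEZX : ∀ i, ∫ ω, Z i ω * X i ω ∂Prob = μ)
    (L : ℕ) (hL : 0 < L) (δ : ℝ) (hδ : δ ∈ Set.Ioo (0 : ℝ) 1) :
    1 - δ < (Prob {ω | (∑ i ∈ range L, Z i ω * X i ω) / (∑ i ∈ range L, Z i ω) - μ
        < Real.sqrt (2 * b ^ 2 * Real.log (2 / δ) / L)}).toReal :=
  selfNormalized_IS_additive_concentration_general Prob X Z b μ hb hmeas hindep hX hZ hEZ hEZX L hL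
    δ hδ
end

section
/- Under the stated assumptions with μ > 0, for any δ ∈ (0,1), with probability greater than 1 − δ, μ̂_L > ( 1 − √( 27 b log(2/δ) / (L μ) ) ) · μ. -/
/-!
Write `S = ∑ Zᵢ Xᵢ` and `T = ∑ Zᵢ`, so that `μ̂_L = S / T` with `E S = L μ` and `E T = L`.
For a variable `Y ∈ [0, b]` with mean `m` one has `Y² ≤ b Y`, hence
`E exp (s Y) ≤ 1 + (s + s² b) m ≤ exp ((s + s² b) m)` whenever `|s| b ≤ 1`; this gives
multiplicative Chernoff bounds `exp (-a² L m / (4 b))` on both tails of a sum of `L`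
independent such variables.
With `ε² = 27 b log (2/δ) / (L μ)`, the events `S ≤ (1 - ε/2) L μ` and `T ≥ (1 + √μ ε/2) L`
both have probability `exp (-(27/16) log (2/δ)) < δ/2`, and outside them
`S / T > (1 - ε/2) μ / (1 + ε/2) ≥ (1 - ε) μ` because `μ ≤ 1`.
-/

open Finset MeasureTheory ProbabilityTheory Real

namespace ProbabilityTheory

variable {Ω ι : Type*} [MeasurableSpace Ω] {P : Measure Ω} [IsProbabilityMeasure P]

lemma mgf_le_exp_of_ae_mem_Icc {Y : Ω → ℝ} {b m s : ℝ} (hY : AEMeasurable Y P)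
    (hYb : ∀ᵐ ω ∂P, Y ω ∈ Set.Icc 0 b) (hm : P[Y] = m) (hs : |s| * b ≤ 1) :
    mgf Y P s ≤ exp ((s + s ^ 2 * b) * m) := by
  have hYint : Integrable Y P := .of_mem_Icc 0 b hY hYb
  have hpoint : ∀ᵐ ω ∂P, exp (s * Y ω) ≤ 1 + (s + s ^ 2 * b) * Y ω := by
    filter_upwards [hYb] with ω ⟨hY0, hYb⟩
    have hsY : |s * Y ω| ≤ 1 := by
      rw [abs_mul, abs_of_nonneg hY0]
      nlinarith [abs_nonneg s]
    have hexp := (abs_le.1 (abs_exp_sub_one_sub_id_le hsY)).2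
    have hsq : (s * Y ω) ^ 2 ≤ s ^ 2 * b * Y ω := by
      have : Y ω ^ 2 ≤ b * Y ω := by nlinarith
      nlinarith [mul_le_mul_of_nonneg_left this (sq_nonneg s)]
    linarith
  calc mgf Y P s ≤ ∫ ω, 1 + (s + s ^ 2 * b) * Y ω ∂P :=
        integral_mono_ae (integrable_exp_mul_of_mem_Icc hY hYb)
          ((integrable_const 1).add (hYint.const_mul _)) hpoint
    _ = 1 + (s + s ^ 2 * b) * m := by
        rw [integral_add (integrable_const 1) (hYint.const_mul _), integral_const_mul, hm]
        simp
    _ ≤ exp ((s + s ^ 2 * b) * m) := by linarith [add_one_le_exp ((s + s ^ 2 * b) * m)]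

lemma iIndepFun.mgf_sum_le_exp_of_ae_mem_Icc {Y : ι → Ω → ℝ} {b m s : ℝ}
    (hindep : iIndepFun Y P) (hY : ∀ i, Measurable (Y i))
    (hYb : ∀ i, ∀ᵐ ω ∂P, Y i ω ∈ Set.Icc 0 b) (hm : ∀ i, P[Y i] = m) (hs : |s| * b ≤ 1)
    (t : Finset ι) :
    mgf (∑ i ∈ t, Y i) P s ≤ exp (#t * ((s + s ^ 2 * b) * m)) := by
  rw [hindep.mgf_sum hY, exp_nat_mul, ← Finset.prod_const]
  exact prod_le_prod (fun _ _ => mgf_nonneg)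
    fun i _ => mgf_le_exp_of_ae_mem_Icc (hY i).aemeasurable (hYb i) (hm i) hs

lemma iIndepFun.measureReal_sum_le_le_exp {Y : ι → Ω → ℝ} {b m a : ℝ}
    (hindep : iIndepFun Y P) (hY : ∀ i, Measurable (Y i))
    (hYb : ∀ i, ∀ᵐ ω ∂P, Y i ω ∈ Set.Icc 0 b) (hm : ∀ i, P[Y i] = m) (hb : 0 < b)
    (ha : 0 ≤ a) (ha2 : a ≤ 2) (t : Finset ι) :
    P.real {ω | ∑ i ∈ t, Y i ω ≤ (1 - a) * (#t * m)} ≤ exp (-(a ^ 2 * (#t * m) / (4 * b))) := by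
  set s := -(a / (2 * b))
  have hs : |s| * b ≤ 1 := by
    rw [abs_neg, abs_of_nonneg (by positivity), div_mul_eq_mul_div, mul_div_mul_right _ _ hb.ne']
    linarith
  have hint := hindep.integrable_exp_mul_sum (t := s) (s := t) hY
    fun i _ => integrable_exp_mul_of_mem_Icc (hY i).aemeasurable (hYb i)
  calc P.real {ω | ∑ i ∈ t, Y i ω ≤ (1 - a) * (#t * m)}
      ≤ exp (-s * ((1 - a) * (#t * m))) * mgf (∑ i ∈ t, Y i) P s := by
        simpa only [Finset.sum_apply] using
          measure_le_le_exp_mul_mgf _ (neg_nonpos.2 (by positivity)) hint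
    _ ≤ exp (-s * ((1 - a) * (#t * m))) * exp (#t * ((s + s ^ 2 * b) * m)) := by
        gcongr
        exact hindep.mgf_sum_le_exp_of_ae_mem_Icc hY hYb hm hs t
    _ = exp (-(a ^ 2 * (#t * m) / (4 * b))) := by
        rw [← exp_add]
        congr 1
        simp only [s]
        field_simp
        ring

lemma iIndepFun.measureReal_sum_ge_le_exp {Y : ι → Ω → ℝ} {b m a : ℝ}
    (hindep : iIndepFun Y P) (hY : ∀ i, Measurable (Y i))
    (hYb : ∀ i, ∀ᵐ ω ∂P, Y i ω ∈ Set.Icc 0 b) (hm : ∀ i, P[Y i] = m) (hb : 0 < b)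
    (ha : 0 ≤ a) (ha2 : a ≤ 2) (t : Finset ι) :
    P.real {ω | (1 + a) * (#t * m) ≤ ∑ i ∈ t, Y i ω} ≤ exp (-(a ^ 2 * (#t * m) / (4 * b))) := by
  set s := a / (2 * b)
  have hs : |s| * b ≤ 1 := by
    rw [abs_of_nonneg (by positivity), div_mul_eq_mul_div, mul_div_mul_right _ _ hb.ne']
    linarith
  have hint := hindep.integrable_exp_mul_sum (t := s) (s := t) hY
    fun i _ => integrable_exp_mul_of_mem_Icc (hY i).aemeasurable (hYb i)
  calc P.real {ω | (1 + a) * (#t * m) ≤ ∑ i ∈ t, Y i ω}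
      ≤ exp (-s * ((1 + a) * (#t * m))) * mgf (∑ i ∈ t, Y i) P s := by
        simpa only [Finset.sum_apply] using measure_ge_le_exp_mul_mgf _ (by positivity) hint
    _ ≤ exp (-s * ((1 + a) * (#t * m))) * exp (#t * ((s + s ^ 2 * b) * m)) := by
        gcongr
        exact hindep.mgf_sum_le_exp_of_ae_mem_Icc hY hYb hm hs t
    _ = exp (-(a ^ 2 * (#t * m) / (4 * b))) := by
        rw [← exp_add]
        congr 1
        simp only [s]
        field_simp
        ring

end ProbabilityTheory

lemma lt_div_of_lt_of_le_of_lt {S T n μ a c ε : ℝ} (hn : 0 ≤ n) (hμ : 0 ≤ μ) (ha : a ≤ 1)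
    (hε : ε ≤ 1) (hac : (1 - ε) * (1 + c) ≤ 1 - a) (hS : (1 - a) * (n * μ) < S) (hST : S ≤ T)
    (hT : T < (1 + c) * n) :
    (1 - ε) * μ < S / T := by
  have hT0 : 0 < T := by nlinarith [mul_nonneg hn hμ]
  rw [lt_div_iff₀ hT0]
  calc (1 - ε) * μ * T ≤ (1 - ε) * μ * ((1 + c) * n) := by gcongr
    _ = (1 - ε) * (1 + c) * (n * μ) := by ring
    _ ≤ (1 - a) * (n * μ) := by gcongr
    _ < S := hS

lemma one_sub_add_le_measureReal_of_ae {Ω : Type*} [MeasurableSpace Ω] {P : Measure Ω}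
    [IsProbabilityMeasure P] {E A B : Set Ω} {x y : ℝ} (hA : P.real A ≤ x) (hB : P.real B ≤ y)
    (h : ∀ᵐ ω ∂P, ω ∉ A → ω ∉ B → ω ∈ E) :
    1 - (x + y) ≤ P.real E := by
  have hcover : (Set.univ : Set Ω) =ᵐ[P] (E ∪ (A ∪ B) : Set Ω) := by
    refine (Filter.eventuallyEq_univ.2 ?_).symm
    filter_upwards [h] with ω hω
    tauto
  have hunion : P.real (E ∪ (A ∪ B)) ≤ P.real E + (P.real A + P.real B) :=
    (measureReal_union_le E _).trans (by gcongr; exact measureReal_union_le A B)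
  rw [← measureReal_congr hcover, probReal_univ] at hunion
  linarith

section SelfNormalized

variable {Ω : Type*} [MeasurableSpace Ω] {P : Measure Ω} [IsProbabilityMeasure P]
  {Y Z : ℕ → Ω → ℝ} {b μ ε : ℝ}

theorem selfNormalized_lower_tail_of_le_one (hb : 0 < b) (hY : ∀ i, Measurable (Y i))
    (hZ : ∀ i, Measurable (Z i)) (hYi : iIndepFun Y P) (hZi : iIndepFun Z P)
    (hYZ : ∀ i, ∀ᵐ ω ∂P, Y i ω ∈ Set.Icc 0 (Z i ω)) (hZb : ∀ i, ∀ᵐ ω ∂P, Z i ω ∈ Set.Icc 0 b)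
    (hEY : ∀ i, P[Y i] = μ) (hEZ : ∀ i, P[Z i] = 1) (L : ℕ) (hε0 : 0 ≤ ε) (hε1 : ε ≤ 1) :
    1 - 2 * exp (-(L * μ * ε ^ 2 / (16 * b))) ≤
      P.real {ω | (1 - ε) * μ < (∑ i ∈ range L, Y i ω) / ∑ i ∈ range L, Z i ω} := by
  have hYb : ∀ i, ∀ᵐ ω ∂P, Y i ω ∈ Set.Icc 0 b := fun i => by
    filter_upwards [hYZ i, hZb i] with ω hYω hZω using ⟨hYω.1, hYω.2.trans hZω.2⟩
  have hμ0 : 0 ≤ μ := hEY 0 ▸ integral_nonneg_of_ae ((hYZ 0).mono fun _ h => h.1)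
  have hμ1 : μ ≤ 1 := hEY 0 ▸ hEZ 0 ▸
    integral_mono_ae (.of_mem_Icc 0 b (hY 0).aemeasurable (hYb 0))
      (.of_mem_Icc 0 b (hZ 0).aemeasurable (hZb 0)) ((hYZ 0).mono fun _ h => h.2)
  -- `c² = μ a²` makes the two tail bounds equal.
  set a := ε / 2 with ha
  set c := √μ * ε / 2 with hc
  have hc0 : 0 ≤ c := by positivity
  have hca : c ≤ a := by
    have := mul_le_of_le_one_left hε0 (sqrt_le_one.2 hμ1)
    linarith
  have hA := hYi.measureReal_sum_le_le_exp hY hYb hEY hb (a := a) (by positivity) (by linarith)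
    (range L)
  have hB := hZi.measureReal_sum_ge_le_exp hZ hZb hEZ hb (a := c) hc0 (by linarith) (range L)
  refine le_trans (le_of_eq ?_) (one_sub_add_le_measureReal_of_ae hA hB ?_)
  · simp only [a, c, card_range, div_pow, mul_pow, sq_sqrt hμ0]
    ring_nf
  · filter_upwards [ae_all_iff.2 hYZ] with ω hω hωA hωB
    simp only [not_le, card_range, mul_one] at hωA hωB ⊢
    refine lt_div_of_lt_of_le_of_lt L.cast_nonneg hμ0 (by linarith) hε1 ?_ hωA
      (sum_le_sum fun i _ => (hω i).2) hωB
    nlinarith [mul_nonneg hε0 hc0]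

theorem selfNormalized_lower_tail (hb : 0 < b) (hμ : 0 < μ) (hY : ∀ i, Measurable (Y i))
    (hZ : ∀ i, Measurable (Z i)) (hYi : iIndepFun Y P) (hZi : iIndepFun Z P)
    (hYZ : ∀ i, ∀ᵐ ω ∂P, Y i ω ∈ Set.Icc 0 (Z i ω)) (hZb : ∀ i, ∀ᵐ ω ∂P, Z i ω ∈ Set.Icc 0 b)
    (hEY : ∀ i, P[Y i] = μ) (hEZ : ∀ i, P[Z i] = 1) (L : ℕ) (hε : 0 ≤ ε) :
    1 - 2 * exp (-(L * μ * ε ^ 2 / (16 * b))) ≤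
      P.real {ω | (1 - ε) * μ < (∑ i ∈ range L, Y i ω) / ∑ i ∈ range L, Z i ω} := by
  rcases le_or_gt ε 1 with hε1 | hε1
  · exact selfNormalized_lower_tail_of_le_one hb hY hZ hYi hZi hYZ hZb hEY hEZ L hε hε1
  · refine le_trans ?_ (one_sub_add_le_measureReal_of_ae (A := ∅) (B := ∅) (x := 0) (y := 0)
      (by simp) (by simp) ?_)
    · linarith [exp_pos (-(L * μ * ε ^ 2 / (16 * b)))]
    · filter_upwards [ae_all_iff.2 hYZ] with ω hω _ _
      exact (mul_neg_of_neg_of_pos (by linarith) hμ).trans_le <| div_nonneg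
        (sum_nonneg fun i _ => (hω i).1) (sum_nonneg fun i _ => (hω i).1.trans (hω i).2)

end SelfNormalized

theorem selfNormalized_IS_relative_lower_general
    {Ω : Type*} [MeasurableSpace Ω] (Prob : Measure Ω) [IsProbabilityMeasure Prob]
    (X Z : ℕ → Ω → ℝ) (b μ : ℝ) (hb : 0 < b) (hμ : 0 < μ)
    (hmeas : ∀ i, Measurable fun ω => (X i ω, Z i ω))
    (hindep : iIndepFun (m := fun _ : ℕ => (inferInstance : MeasurableSpace (ℝ × ℝ)))
      (fun i ω => (X i ω, Z i ω)) Prob)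
    (hX : ∀ i, ∀ᵐ ω ∂Prob, X i ω = 0 ∨ X i ω = 1)
    (hZ : ∀ i, ∀ᵐ ω ∂Prob, Z i ω ∈ Set.Icc 0 b)
    (hEZ : ∀ i, ∫ ω, Z i ω ∂Prob = 1)
    (hEZX : ∀ i, ∫ ω, Z i ω * X i ω ∂Prob = μ)
    (L : ℕ) (hL : 0 < L) (δ : ℝ) (hδ : δ ∈ Set.Ioo (0 : ℝ) 1) :
    1 - δ < (Prob {ω | (1 - Real.sqrt (27 * b * Real.log (2 / δ) / (L * μ))) * μ
        < (∑ i ∈ range L, Z i ω * X i ω) / (∑ i ∈ range L, Z i ω)}).toReal := by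
  obtain ⟨hδ0, hδ1⟩ := hδ
  have hYZ : ∀ i, ∀ᵐ ω ∂Prob, Z i ω * X i ω ∈ Set.Icc 0 (Z i ω) := fun i => by
    filter_upwards [hX i, hZ i] with ω hXω hZω
    rcases hXω with hXω | hXω <;> simp [hXω, hZω.1]
  set ε := √(27 * b * log (2 / δ) / (L * μ)) with hε
  have htail := selfNormalized_lower_tail (Y := fun i ω => Z i ω * X i ω) (ε := ε) hb hμ
    (fun i => (hmeas i).snd.mul (hmeas i).fst) (fun i => (hmeas i).snd)
    (hindep.comp (fun _ p => p.2 * p.1) fun _ => measurable_snd.mul measurable_fst)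
    (hindep.comp (fun _ p => p.2) fun _ => measurable_snd) hYZ hZ hEZX hEZ L (sqrt_nonneg _)
  have hlog : 0 < log (2 / δ) := log_pos (by rw [lt_div_iff₀ hδ0]; linarith)
  have hfail : 2 * exp (-(L * μ * ε ^ 2 / (16 * b))) < δ := by
    rw [hε, sq_sqrt (by positivity)]
    calc 2 * exp (-(L * μ * (27 * b * log (2 / δ) / (L * μ)) / (16 * b)))
        < 2 * exp (-log (2 / δ)) := by
          gcongr
          field_simp
          linarith
      _ = δ := by rw [exp_neg, exp_log (by positivity), inv_div]; ring
  exact lt_of_lt_of_le (by linarith) htail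

/-- Proposition 2, lower tail: relative concentration of the
self-normalized importance-sampling estimator.  For i.i.d. pairs `(Xᵢ, Zᵢ)`
with `Xᵢ ∈ {0,1}`, `Zᵢ ∈ [0,b]`, `E[Zᵢ] = 1` and `E[ZᵢXᵢ] = μ > 0`, with
probability greater than `1 − δ`,
`μ̂_L > (1 − √(27 b log(2/δ) / (L μ))) μ`. -/
theorem selfNormalized_IS_relative_lower
    {Ω : Type*} [MeasurableSpace Ω] (Prob : Measure Ω) [IsProbabilityMeasure Prob]
    (X Z : ℕ → Ω → ℝ) (b μ : ℝ) (hb : 0 < b) (hμ : 0 < μ)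
    (hmeas : ∀ i, Measurable fun ω => (X i ω, Z i ω))
    (hindep : iIndepFun (m := fun _ : ℕ => (inferInstance : MeasurableSpace (ℝ × ℝ)))
      (fun i ω => (X i ω, Z i ω)) Prob)
    (hident : ∀ i, IdentDistrib (fun ω => (X i ω, Z i ω)) (fun ω => (X 0 ω, Z 0 ω)) Prob Prob)
    (hX : ∀ i, ∀ᵐ ω ∂Prob, X i ω = 0 ∨ X i ω = 1)
    (hZ : ∀ i, ∀ᵐ ω ∂Prob, Z i ω ∈ Set.Icc 0 b)
    (hEZ : ∀ i, ∫ ω, Z i ω ∂Prob = 1)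
    (hEZX : ∀ i, ∫ ω, Z i ω * X i ω ∂Prob = μ)
    (L : ℕ) (hL : 0 < L) (δ : ℝ) (hδ : δ ∈ Set.Ioo (0 : ℝ) 1) :
    1 - δ < (Prob {ω | (1 - Real.sqrt (27 * b * Real.log (2 / δ) / (L * μ))) * μ
        < (∑ i ∈ range L, Z i ω * X i ω) / (∑ i ∈ range L, Z i ω)}).toReal :=
  selfNormalized_IS_relative_lower_general Prob X Z b μ hb hμ hmeas hindep hX hZ hEZ hEZX L hL δ hδ
end

section
/- Let y = (y_1,…,y_N) ∈ S^N have distinct entries, and assume π_{y_t} > 0 for all t and A_{y_s, y_t} > 0 for all s ≠ t. For a permutation τ ∈ Ψ_N, define the causal sampling probability R[τ] = ( π_{y_{τ_1}} / ∑_{t=1}^N π_{y_t} ) · ∏_{i=2}^N ( A_{y_{τ_{i−1}}, y_{τ_i}} / ∑_{t ∉ {τ_1,…,τ_{i−1}}} A_{y_{τ_{i−1}}, y_t} ). Then: (i) R is a probability distribution on Ψ_N, i.e., ∑_{τ∈Ψ_N} R[τ] = 1; and (ii) for every τ ∈ Ψ_N, the ordered-path likelihood factors as P[y|τ,A,π]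 = ( ∑_{t=1}^N π_{y_t} ) · R[τ] · z(τ), where z(τ) = ∏_{i=2}^N ∑_{t ∉ {τ_1,…,τ_{i−1}}} A_{y_{τ_{i−1}}, y_t}; in particular the importance weight P[τ|y,A,π]/R[τ] is proportional (over τ ∈ Ψ_N) to z(τ). -/
/-!
`causalR` is the law of a sequential sampler: the first index is drawn with weights `π ∘ y`, and
each later one among the unvisited indices with weights `A (y s) ·`, `s` being the index drawn
just before. For a fixed prefix the probabilities of the possible next indices sum to one
(positivity of `A` off the diagonal keeps the normaliser nonzero), so summing out the positions
from the last one backwards, by downward induction on the prefix length, gives total mass one.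
The likelihood factors because these normalisers are exactly the factors of `causalZ`.
-/

open Finset

namespace NICO

variable {S : Type*} [Fintype S]

/-- The causal importance-sampling distribution on permutations:
`R[τ] = (π_{y_{τ₁}} / ∑_t π_{y_t}) ∏_{i=2}^N (A_{y_{τ_{i−1}},y_{τ_i}} /
∑_{t ∉ {τ₁,…,τ_{i−1}}} A_{y_{τ_{i−1}},y_t})`. -/
noncomputable def causalR (A : S → S → ℝ) (π : S → ℝ) {N : ℕ} (hN : 0 < N)
    (y : Fin N → S) (τ : Equiv.Perm (Fin N)) : ℝ :=
  (π (y (τ ⟨0, hN⟩)) / ∑ t : Fin N, π (y t)) *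
    ∏ i ∈ Finset.univ.filter (fun i : Fin N => 0 < i.val),
      (A (y (τ ⟨i.val - 1, Nat.lt_of_le_of_lt (Nat.sub_le i.val 1) i.isLt⟩)) (y (τ i)) /
        ∑ t ∈ Finset.univ.filter (fun t : Fin N => ∀ j : Fin N, j.val < i.val → τ j ≠ t),
          A (y (τ ⟨i.val - 1, Nat.lt_of_le_of_lt (Nat.sub_le i.val 1) i.isLt⟩)) (y t))

/-- The causal importance weight
`z(τ) = ∏_{i=2}^N ∑_{t ∉ {τ₁,…,τ_{i−1}}} A_{y_{τ_{i−1}},y_t}`. -/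
noncomputable def causalZ (A : S → S → ℝ) {N : ℕ} (y : Fin N → S)
    (τ : Equiv.Perm (Fin N)) : ℝ :=
  ∏ i ∈ Finset.univ.filter (fun i : Fin N => 0 < i.val),
    ∑ t ∈ Finset.univ.filter (fun t : Fin N => ∀ j : Fin N, j.val < i.val → τ j ≠ t),
      A (y (τ ⟨i.val - 1, Nat.lt_of_le_of_lt (Nat.sub_le i.val 1) i.isLt⟩)) (y t)

section Sampling

variable {N : ℕ}

theorem prod_ite_val_eq_zero {M : Type*} [CommMonoid M] (hN : 0 < N) (a b : Fin N → M) :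
    ∏ i : Fin N, (if i.val = 0 then a i else b i) =
      a ⟨0, hN⟩ * ∏ i ∈ univ.filter (fun i : Fin N => 0 < i.val), b i := by
  have herase : univ.erase ⟨0, hN⟩ = univ.filter (fun i : Fin N => 0 < i.val) := by
    ext i
    simp only [mem_erase, mem_filter, mem_univ, and_true, true_and, ne_eq, Fin.ext_iff]
    omega
  rw [← mul_prod_erase univ _ (mem_univ ⟨0, hN⟩), herase, if_pos rfl]
  exact congrArg _ (prod_congr rfl fun i hi => if_neg (mem_filter.mp hi).2.ne')

/-- Junk value `prevIndex 0 = 0`; it is only used at positive indices. -/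
def prevIndex (i : Fin N) : Fin N :=
  ⟨i.val - 1, Nat.lt_of_le_of_lt (Nat.sub_le i.val 1) i.isLt⟩

def unvisited (f : Fin N → Fin N) (i : Fin N) : Finset (Fin N) :=
  univ.filter fun t : Fin N => ∀ j : Fin N, j.val < i.val → f j ≠ t

def stepDenom (w : Fin N → Fin N → ℝ) (f : Fin N → Fin N) (i : Fin N) : ℝ :=
  ∑ t ∈ unvisited f i, w (f (prevIndex i)) t

noncomputable def stepFactor (w : Fin N → Fin N → ℝ) (f : Fin N → Fin N)
    (i : Fin N) : ℝ :=
  w (f (prevIndex i)) (f i) / stepDenom w f i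

def prefixPerms (k : ℕ) (g : Fin N → Fin N) : Finset (Equiv.Perm (Fin N)) :=
  univ.filter fun τ : Equiv.Perm (Fin N) => ∀ i : Fin N, i.val < k → τ i = g i

theorem prevIndex_lt {i : Fin N} (hi : 0 < i.val) : prevIndex i < i := by
  rw [Fin.lt_def]
  exact Nat.sub_lt hi one_pos

theorem unvisited_nonempty (f : Fin N → Fin N) (i : Fin N) : (unvisited f i).Nonempty := by
  have hcard : #((Iio i).image f) < #(univ : Finset (Fin N)) := by
    rw [card_univ, Fintype.card_fin]
    exact (card_image_le.trans_eq (Fin.card_Iio i)).trans_lt i.isLt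
  obtain ⟨t, -, ht⟩ := exists_mem_notMem_of_card_lt_card hcard
  refine ⟨t, mem_filter.mpr ⟨mem_univ t, fun j hj hjt => ht ?_⟩⟩
  exact mem_image.mpr ⟨j, mem_Iio.mpr hj, hjt⟩

theorem unvisited_zero (f : Fin N → Fin N) (hN : 0 < N) : unvisited f ⟨0, hN⟩ = univ := by
  simp [unvisited]

theorem unvisited_congr {f g : Fin N → Fin N} {i : Fin N} (h : ∀ j < i, f j = g j) :
    unvisited f i = unvisited g i := by
  ext t
  simp only [unvisited, mem_filter, mem_univ, true_and]
  exact forall_congr' fun j => imp_congr_right fun hj => by rw [h j hj]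

theorem stepFactor_congr (w : Fin N → Fin N → ℝ) {f g : Fin N → Fin N} {i : Fin N}
    (h : ∀ j ≤ i, f j = g j) : stepFactor w f i = stepFactor w g i := by
  have hprev : f (prevIndex i) = g (prevIndex i) :=
    h _ (by simp [Fin.le_iff_val_le_val, prevIndex])
  simp only [stepFactor, stepDenom, unvisited_congr fun j hj => h j hj.le, hprev, h i le_rfl]

variable {w : Fin N → Fin N → ℝ}

theorem stepDenom_pos (hw : ∀ s t, s ≠ t → 0 < w s t) (f : Fin N → Fin N) {i : Fin N}
    (hi : 0 < i.val) : 0 < stepDenom w f i := by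
  refine sum_pos (fun t ht => hw _ _ ?_) (unvisited_nonempty f i)
  exact (mem_filter.mp ht).2 _ (prevIndex_lt hi)

theorem prod_stepFactor_mul_prod_stepDenom (hw : ∀ s t, s ≠ t → 0 < w s t)
    (f : Fin N → Fin N) :
    (∏ i ∈ univ.filter (fun i : Fin N => 0 < i.val), stepFactor w f i) *
        ∏ i ∈ univ.filter (fun i : Fin N => 0 < i.val), stepDenom w f i =
      ∏ i ∈ univ.filter (fun i : Fin N => 0 < i.val), w (f (prevIndex i)) (f i) := by
  rw [← prod_mul_distrib]
  refine prod_congr rfl fun i hi => div_mul_cancel₀ _ (stepDenom_pos hw f ?_).ne'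
  exact (mem_filter.mp hi).2

theorem sum_stepFactor_update (hw : ∀ s t, s ≠ t → 0 < w s t) (g : Fin N → Fin N)
    {i : Fin N} (hi : 0 < i.val) :
    ∑ v ∈ unvisited g i, stepFactor w (Function.update g i v) i = 1 := by
  have hupdate : ∀ v, stepFactor w (Function.update g i v) i =
      w (g (prevIndex i)) v / stepDenom w g i := by
    intro v
    have hbelow : ∀ j < i, Function.update g i v j = g j :=
      fun j hj => Function.update_of_ne hj.ne _ _
    simp only [stepFactor, stepDenom, Function.update_self, hbelow _ (prevIndex_lt hi),
      unvisited_congr hbelow]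
  rw [sum_congr rfl fun v _ => hupdate v, ← sum_div]
  exact div_self (stepDenom_pos hw g hi).ne'

theorem prefixPerms_zero (g : Fin N → Fin N) : prefixPerms 0 g = univ := by
  simp [prefixPerms]

theorem prefixPerms_self {g : Fin N → Fin N} (hg : Function.Injective g) :
    prefixPerms N g = {Equiv.ofBijective g hg.bijective_of_finite} := by
  ext τ
  simp only [prefixPerms, mem_filter, mem_univ, true_and, mem_singleton, Fin.is_lt,
    forall_const, Equiv.ext_iff, Equiv.ofBijective_apply]

theorem filter_prefixPerms_apply_eq (k : Fin N) (g : Fin N → Fin N) (v : Fin N) :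
    (prefixPerms k g).filter (fun τ => τ k = v) =
      prefixPerms (k + 1) (Function.update g k v) := by
  ext τ
  simp only [prefixPerms, mem_filter, mem_univ, true_and]
  constructor
  · rintro ⟨hτ, rfl⟩ i hi
    rcases Nat.lt_succ_iff_lt_or_eq.mp hi with hi | hi
    · rw [Function.update_of_ne (Fin.ne_of_lt hi), hτ i hi]
    · rw [Fin.ext hi, Function.update_self]
  · intro hτ
    refine ⟨fun i hi => ?_, by simpa using hτ k (Nat.lt_succ_self _)⟩
    rw [hτ i (Nat.lt_succ_of_lt hi), Function.update_of_ne (Fin.ne_of_lt hi)]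

theorem sum_prefixPerms_eq_sum_unvisited {β : Type*} [AddCommMonoid β] (k : Fin N)
    (g : Fin N → Fin N) (F : Equiv.Perm (Fin N) → β) :
    ∑ τ ∈ prefixPerms k g, F τ =
      ∑ v ∈ unvisited g k, ∑ τ ∈ prefixPerms (k + 1) (Function.update g k v), F τ := by
  have hmaps : ∀ τ ∈ prefixPerms k g, τ k ∈ unvisited g k := by
    intro τ hτ
    refine mem_filter.mpr ⟨mem_univ _, fun j hj hjk => ?_⟩
    rw [← (mem_filter.mp hτ).2 j hj] at hjk
    exact (Fin.ne_of_lt hj) (τ.injective hjk)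
  rw [← sum_fiberwise_of_maps_to hmaps]
  exact sum_congr rfl fun v _ => by rw [filter_prefixPerms_apply_eq]

theorem injOn_update_of_mem_unvisited {k : ℕ} (hk : k < N) {g : Fin N → Fin N}
    (hg : Set.InjOn g {i | i.val < k}) {v : Fin N} (hv : v ∈ unvisited g ⟨k, hk⟩) :
    Set.InjOn (Function.update g ⟨k, hk⟩ v) {i | i.val < k + 1} := by
  have hset : {i : Fin N | i.val < k + 1} = insert ⟨k, hk⟩ {i | i.val < k} := by
    ext i
    simp only [Set.mem_ofPred_eq, Set.mem_insert_iff, Fin.ext_iff]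
    omega
  have hbelow : Set.EqOn (Function.update g ⟨k, hk⟩ v) g {i | i.val < k} :=
    fun i hi => Function.update_of_ne (Fin.ne_of_lt hi) _ _
  rw [hset, Set.injOn_insert (by simp), hbelow.injOn_iff, hbelow.image_eq, Function.update_self]
  refine ⟨hg, ?_⟩
  rintro ⟨j, hj, hjv⟩
  exact (mem_filter.mp hv).2 j hj hjv

theorem sum_prefixPerms_prod_stepFactor (hw : ∀ s t, s ≠ t → 0 < w s t) {k : ℕ} (hk : 0 < k)
    (hkN : k ≤ N) {g : Fin N → Fin N} (hg : Set.InjOn g {i | i.val < k}) :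
    ∑ τ ∈ prefixPerms k g,
      ∏ i ∈ univ.filter (fun i : Fin N => k ≤ i.val), stepFactor w τ i = 1 := by
  induction hkN using Nat.decreasingInduction generalizing g with
  | self =>
    have hempty : univ.filter (fun i : Fin N => N ≤ i.val) = ∅ :=
      filter_eq_empty_iff.mpr fun i _ => not_le.mpr i.isLt
    rw [prefixPerms_self fun a b hab => hg a.isLt b.isLt hab, hempty, sum_singleton, prod_empty]
  | of_succ k hkN ih =>
    let zk : Fin N := ⟨k, hkN⟩
    have hsplit : univ.filter (fun i : Fin N => k ≤ i.val) =
        insert zk (univ.filter (fun i : Fin N => k + 1 ≤ i.val)) := by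
      ext i
      simp only [mem_filter, mem_univ, true_and, mem_insert, zk, Fin.ext_iff]
      omega
    calc ∑ τ ∈ prefixPerms k g,
          ∏ i ∈ univ.filter (fun i : Fin N => k ≤ i.val), stepFactor w τ i
        = ∑ v ∈ unvisited g zk, ∑ τ ∈ prefixPerms (k + 1) (Function.update g zk v),
            stepFactor w (Function.update g zk v) zk *
              ∏ i ∈ univ.filter (fun i : Fin N => k + 1 ≤ i.val), stepFactor w τ i := by
          rw [sum_prefixPerms_eq_sum_unvisited zk]
          refine sum_congr rfl fun v _ => sum_congr rfl fun τ hτ => ?_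
          rw [hsplit, prod_insert (by simp [zk])]
          refine congrArg (· * _) (stepFactor_congr w fun j hj => ?_)
          exact (mem_filter.mp hτ).2 j (Nat.lt_succ_of_le hj)
      _ = ∑ v ∈ unvisited g zk, stepFactor w (Function.update g zk v) zk := by
          refine sum_congr rfl fun v hv => ?_
          rw [← mul_sum, ih (Nat.succ_pos k) (injOn_update_of_mem_unvisited hkN hg hv), mul_one]
      _ = 1 := sum_stepFactor_update hw g hk

theorem sum_div_mul_prod_stepFactor (hw : ∀ s t, s ≠ t → 0 < w s t) (hN : 0 < N)
    {p : Fin N → ℝ} (hp : ∑ t, p t ≠ 0) :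
    ∑ τ : Equiv.Perm (Fin N), (p (τ ⟨0, hN⟩) / ∑ t, p t) *
      ∏ i ∈ univ.filter (fun i : Fin N => 0 < i.val), stepFactor w τ i = 1 := by
  let F : Equiv.Perm (Fin N) → ℝ := fun τ => (p (τ ⟨0, hN⟩) / ∑ t, p t) *
    ∏ i ∈ univ.filter (fun i : Fin N => 0 < i.val), stepFactor w τ i
  have hinj : ∀ g : Fin N → Fin N, Set.InjOn g {i : Fin N | i.val < 1} := fun g a ha b hb _ =>
    Fin.ext ((Nat.lt_one_iff.mp ha).trans (Nat.lt_one_iff.mp hb).symm)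
  calc ∑ τ, F τ = ∑ τ ∈ prefixPerms 0 id, F τ := by rw [prefixPerms_zero]
    _ = ∑ v, ∑ τ ∈ prefixPerms 1 (Function.update id ⟨0, hN⟩ v), (p v / ∑ t, p t) *
          ∏ i ∈ univ.filter (fun i : Fin N => 1 ≤ i.val), stepFactor w τ i := by
        rw [sum_prefixPerms_eq_sum_unvisited ⟨0, hN⟩, unvisited_zero]
        refine sum_congr rfl fun v _ => sum_congr rfl fun τ hτ => ?_
        have hτ0 : τ ⟨0, hN⟩ = v := by simpa using (mem_filter.mp hτ).2 ⟨0, hN⟩ one_pos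
        simp only [F, hτ0, Nat.pos_iff_ne_zero, Nat.one_le_iff_ne_zero]
    _ = ∑ v, p v / ∑ t, p t := by
        refine sum_congr rfl fun v _ => ?_
        rw [← mul_sum, sum_prefixPerms_prod_stepFactor hw one_pos hN (hinj _), mul_one]
    _ = 1 := by rw [← sum_div, div_self hp]

end Sampling

theorem causal_sampler_general
    (A : S → S → ℝ) (π : S → ℝ)
    {N : ℕ} (hN : 0 < N) (y : Fin N → S)
    (hπpos : ∀ t : Fin N, 0 < π (y t))
    (hApos : ∀ s t : Fin N, s ≠ t → 0 < A (y s) (y t)) :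
    (∑ τ : Equiv.Perm (Fin N), causalR A π hN y τ) = 1 ∧
    ∀ τ : Equiv.Perm (Fin N),
      lik A π y τ = (∑ t : Fin N, π (y t)) * causalR A π hN y τ * causalZ A y τ := by
  set w : Fin N → Fin N → ℝ := fun s t => A (y s) (y t)
  have hπsum : ∑ t : Fin N, π (y t) ≠ 0 :=
    (sum_pos (fun t _ => hπpos t) ⟨⟨0, hN⟩, mem_univ _⟩).ne'
  refine ⟨sum_div_mul_prod_stepFactor (w := w) (p := fun t => π (y t)) hApos hN hπsum,
    fun τ => ?_⟩
  have hL : lik A π y τ = π (y (τ ⟨0, hN⟩)) *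
      ∏ i ∈ univ.filter (fun i : Fin N => 0 < i.val), w (τ (prevIndex i)) (τ i) :=
    prod_ite_val_eq_zero hN _ _
  have hR : causalR A π hN y τ = (π (y (τ ⟨0, hN⟩)) / ∑ t : Fin N, π (y t)) *
      ∏ i ∈ univ.filter (fun i : Fin N => 0 < i.val), stepFactor w τ i := rfl
  have hZ : causalZ A y τ =
      ∏ i ∈ univ.filter (fun i : Fin N => 0 < i.val), stepDenom w τ i := rfl
  rw [hL, hR, hZ, ← mul_assoc, mul_div_cancel₀ _ hπsum, mul_assoc,
    prod_stepFactor_mul_prod_stepDenom hApos]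

/-- the causal sampling scheme.  (i) `R` is a probability
distribution on permutations; (ii) the ordered-path likelihood factors as
`P[y|τ,A,π] = (∑_t π_{y_t}) · R[τ] · z(τ)`, so the importance weight is
proportional to `z(τ)`. -/
theorem causal_sampler
    (A : S → S → ℝ) (π : S → ℝ)
    (hA : (∀ i j, 0 ≤ A i j) ∧ ∀ i, ∑ j, A i j = 1)
    (hπ : (∀ i, 0 ≤ π i) ∧ ∑ i, π i = 1)
    {N : ℕ} (hN : 0 < N) (y : Fin N → S) (hy : Function.Injective y)
    (hπpos : ∀ t : Fin N, 0 < π (y t))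
    (hApos : ∀ s t : Fin N, s ≠ t → 0 < A (y s) (y t)) :
    (∑ τ : Equiv.Perm (Fin N), causalR A π hN y τ) = 1 ∧
    ∀ τ : Equiv.Perm (Fin N),
      lik A π y τ = (∑ t : Fin N, π (y t)) * causalR A π hN y τ * causalZ A y τ :=
  causal_sampler_general A π hN y hπpos hApos

end NICO
end
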